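/- arXiv:2412.05814 — 5 statements merged into one kernel-verified Lean document; each statement's English description precedes it below -/
import Mathlib

section
/- Let E be a sandpile graph, H a nonempty saturated hereditary subset of E⁰, and z_H the sum of all idempotents of SP(E_H). Then z_H + SP(E_H) equals the set of recurrent elements of SP(E_H); this set is an abelian group under addition with identity z_H; and its image in SP(E) under the canonical embedding is a maximal subgroup of SP(E), i.e. a subsemigroup of SP(E) that is a group under the induced addition and is maximal under inclusion among such subsemigroups. -/
/-! ### Generic commutative monoid notions -/

/-- The canonical preorder on a commutative monoid: `x ≤ y` iff `y = x + z` for some `z`. -/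
def cle {M : Type} [AddCommMonoid M] (x y : M) : Prop := ∃ z, y = x + z

/-- The archimedean equivalence relation on a commutative monoid. -/
def archRel {M : Type} [AddCommMonoid M] (x y : M) : Prop :=
  (∃ m : ℕ, cle x (m • y)) ∧ (∃ n : ℕ, cle y (n • x))

/-- An element `a` is recurrent if it is accessible from every element. -/
def Recurrent {M : Type} [AddCommMonoid M] (a : M) : Prop := ∀ c, ∃ z, a = c + z

/-- An order-ideal of a commutative monoid: a submonoid `I` with `x + y ∈ I → x ∈ I ∧ y ∈ I`. -/
def IsOrderIdeal {M : Type} [AddCommMonoid M] (I : Set M) : Prop :=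
  0 ∈ I ∧ (∀ x ∈ I, ∀ y ∈ I, x + y ∈ I) ∧ ∀ x y : M, x + y ∈ I → x ∈ I ∧ y ∈ I

/-- A subsemigroup which is a group under the induced addition. -/
def IsSubgroupSet {M : Type} [AddCommMonoid M] (S : Set M) : Prop :=
  S.Nonempty ∧ (∀ x ∈ S, ∀ y ∈ S, x + y ∈ S) ∧
    ∃ e ∈ S, (∀ x ∈ S, e + x = x) ∧ ∀ x ∈ S, ∃ y ∈ S, x + y = e

/-- A maximal subgroup of a commutative monoid. -/
def IsMaximalSubgroup {M : Type} [AddCommMonoid M] (S : Set M) : Prop :=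
  IsSubgroupSet S ∧ ∀ T : Set M, IsSubgroupSet T → S ⊆ T → S = T

/-- The defining setoid of the Grothendieck group of a commutative monoid. -/
def grSetoid (M : Type) [AddCommMonoid M] : Setoid (M × M) where
  r p q := ∃ z, p.1 + q.2 + z = p.2 + q.1 + z
  iseqv := by
    constructor
    · exact fun p => ⟨0, by abel⟩
    · intro p q h
      obtain ⟨z, hz⟩ := h
      exact ⟨z, by
        calc q.1 + p.2 + z = p.2 + q.1 + z := by abel
          _ = p.1 + q.2 + z := hz.symm
          _ = q.2 + p.1 + z := by abel⟩
    · intro p q r h h'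
      obtain ⟨z₁, h₁⟩ := h
      obtain ⟨z₂, h₂⟩ := h'
      refine ⟨q.1 + q.2 + z₁ + z₂, ?_⟩
      have h : (p.1 + q.2 + z₁) + (q.1 + r.2 + z₂) = (p.2 + q.1 + z₁) + (q.2 + r.1 + z₂) := by
        rw [h₁, h₂]
      calc p.1 + r.2 + (q.1 + q.2 + z₁ + z₂)
          = (p.1 + q.2 + z₁) + (q.1 + r.2 + z₂) := by abel
        _ = (p.2 + q.1 + z₁) + (q.2 + r.1 + z₂) := h
        _ = p.2 + r.1 + (q.1 + q.2 + z₁ + z₂) := by abel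

/-- The Grothendieck group of a commutative monoid, as a quotient of `M × M`. -/
def GrGroup (M : Type) [AddCommMonoid M] : Type := Quotient (grSetoid M)

/-- Addition on the Grothendieck group. -/
def GrGroup.add {M : Type} [AddCommMonoid M] (p q : GrGroup M) : GrGroup M :=
  Quotient.map₂
    (fun p q => (p.1 + q.1, p.2 + q.2))
    (by
      intro p p' hp q q' hq
      obtain ⟨z₁, h₁⟩ := hp
      obtain ⟨z₂, h₂⟩ := hq
      refine ⟨z₁ + z₂, ?_⟩
      have h : (p.1 + p'.2 + z₁) + (q.1 + q'.2 + z₂)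
          = (p.2 + p'.1 + z₁) + (q.2 + q'.1 + z₂) := by rw [h₁, h₂]
      calc p.1 + q.1 + (p'.2 + q'.2) + (z₁ + z₂)
          = (p.1 + p'.2 + z₁) + (q.1 + q'.2 + z₂) := by abel
        _ = (p.2 + p'.1 + z₁) + (q.2 + q'.1 + z₂) := h
        _ = p.2 + q.2 + (p'.1 + q'.1) + (z₁ + z₂) := by abel)
    p q

instance {M : Type} [AddCommMonoid M] : Add (GrGroup M) := ⟨GrGroup.add⟩

/-- The defining setoid of the Grothendieck group of a (nonempty, additively closed)
subsemigroup `S` of a commutative monoid. -/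
def grSubSetoid {M : Type} [AddCommMonoid M] (S : Set M) (x₀ : M) (hx₀ : x₀ ∈ S)
    (hcl : ∀ a ∈ S, ∀ b ∈ S, a + b ∈ S) : Setoid (S × S) where
  r p q := ∃ z ∈ S, p.1.1 + q.2.1 + z = p.2.1 + q.1.1 + z
  iseqv := by
    constructor
    · exact fun p => ⟨x₀, hx₀, by abel⟩
    · intro p q h
      obtain ⟨z, hzS, hz⟩ := h
      exact ⟨z, hzS, by
        calc q.1.1 + p.2.1 + z = p.2.1 + q.1.1 + z := by abel
          _ = p.1.1 + q.2.1 + z := hz.symm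
          _ = q.2.1 + p.1.1 + z := by abel⟩
    · intro p q r h h'
      obtain ⟨z₁, hz₁S, h₁⟩ := h
      obtain ⟨z₂, hz₂S, h₂⟩ := h'
      refine ⟨q.1.1 + q.2.1 + z₁ + z₂,
        hcl _ (hcl _ (hcl _ q.1.2 _ q.2.2) _ hz₁S) _ hz₂S, ?_⟩
      have h : (p.1.1 + q.2.1 + z₁) + (q.1.1 + r.2.1 + z₂)
          = (p.2.1 + q.1.1 + z₁) + (q.2.1 + r.1.1 + z₂) := by rw [h₁, h₂]
      calc p.1.1 + r.2.1 + (q.1.1 + q.2.1 + z₁ + z₂)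
          = (p.1.1 + q.2.1 + z₁) + (q.1.1 + r.2.1 + z₂) := by abel
        _ = (p.2.1 + q.1.1 + z₁) + (q.2.1 + r.1.1 + z₂) := h
        _ = p.2.1 + r.1.1 + (q.1.1 + q.2.1 + z₁ + z₂) := by abel

/-- Addition on the Grothendieck group of a subsemigroup. -/
def grSubAdd {M : Type} [AddCommMonoid M] {S : Set M} {x₀ : M} {hx₀ : x₀ ∈ S}
    {hcl : ∀ a ∈ S, ∀ b ∈ S, a + b ∈ S}
    (p q : Quotient (grSubSetoid S x₀ hx₀ hcl)) : Quotient (grSubSetoid S x₀ hx₀ hcl) :=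
  Quotient.map₂
    (fun p q => (⟨p.1.1 + q.1.1, hcl _ p.1.2 _ q.1.2⟩, ⟨p.2.1 + q.2.1, hcl _ p.2.2 _ q.2.2⟩))
    (by
      intro p p' hp q q' hq
      obtain ⟨z₁, hz₁S, h₁⟩ := hp
      obtain ⟨z₂, hz₂S, h₂⟩ := hq
      refine ⟨z₁ + z₂, hcl _ hz₁S _ hz₂S, ?_⟩
      have h : (p.1.1 + p'.2.1 + z₁) + (q.1.1 + q'.2.1 + z₂)
          = (p.2.1 + p'.1.1 + z₁) + (q.2.1 + q'.1.1 + z₂) := by rw [h₁, h₂]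
      calc p.1.1 + q.1.1 + (p'.2.1 + q'.2.1) + (z₁ + z₂)
          = (p.1.1 + p'.2.1 + z₁) + (q.1.1 + q'.2.1 + z₂) := by abel
        _ = (p.2.1 + p'.1.1 + z₁) + (q.2.1 + q'.1.1 + z₂) := h
        _ = p.2.1 + q.2.1 + (p'.1.1 + q'.1.1) + (z₁ + z₂) := by abel)
    p q

/-! ### Finite directed graphs and sandpile monoids -/

/-- A finite directed graph. -/
structure DGraph where
  V : Type
  E : Type
  [fintV : Fintype V]
  [fintE : Fintype E]
  [decV : DecidableEq V]
  [decE : DecidableEq E]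
  src : E → V
  rng : E → V

attribute [instance] DGraph.fintV DGraph.fintE DGraph.decV DGraph.decE

namespace DGraph

variable (G : DGraph)

/-- A vertex is a sink if it emits no edges. -/
def IsSink (v : G.V) : Prop := ∀ e : G.E, G.src e ≠ v

/-- One-step reachability along an edge. -/
def Step (u v : G.V) : Prop := ∃ e : G.E, G.src e = u ∧ G.rng e = v

/-- There is a (possibly empty) path from `u` to `v`. -/
def Reaches (u v : G.V) : Prop := Relation.ReflTransGen G.Step u v

/-- A vertex lies on a cycle iff there is a nontrivial closed path based at it. -/
def OnCycle (v : G.V) : Prop := Relation.TransGen G.Step v v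

/-- A sandpile graph: `s` is the unique sink and every vertex reaches `s`. -/
def IsSandpile (s : G.V) : Prop :=
  G.IsSink s ∧ (∀ v : G.V, G.IsSink v → v = s) ∧ ∀ v : G.V, G.Reaches v s

/-- The set of edges emitted by `v`. -/
def outEdges (v : G.V) : Finset G.E := Finset.univ.filter fun e => G.src e = v

/-- A hereditary subset of vertices. -/
def Hereditary (H : Finset G.V) : Prop := ∀ e : G.E, G.src e ∈ H → G.rng e ∈ H

/-- A saturated subset of vertices. -/
def Saturated (H : Finset G.V) : Prop :=
  ∀ v : G.V, ¬ G.IsSink v → (∀ e : G.E, G.src e = v → G.rng e ∈ H) → v ∈ H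

/-- The restriction graph `E_H` of a hereditary subset `H`. -/
def restrict (H : Finset G.V) (hher : G.Hereditary H) : DGraph where
  V := {v : G.V // v ∈ H}
  E := {e : G.E // G.src e ∈ H}
  src e := ⟨G.src e.1, e.2⟩
  rng e := ⟨G.rng e.1, hher e.1 e.2⟩

/-- The defining relations of the sandpile monoid: `s = 0` and, for each non-sink
vertex `v`, `|s⁻¹(v)|·v = Σ_{e ∈ s⁻¹(v)} r(e)`. -/
def spRel (s : G.V) : Multiset G.V → Multiset G.V → Prop := fun a b =>
  (a = {s} ∧ b = 0) ∨
    ∃ v : G.V, ¬ G.IsSink v ∧ a = Multiset.replicate (G.outEdges v).card v ∧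
      b = (G.outEdges v).val.map G.rng

/-- The congruence on the free commutative monoid `Multiset G.V` generated by the
sandpile relations. -/
def spCon (s : G.V) : AddCon (Multiset G.V) := addConGen (G.spRel s)

/-- The sandpile monoid `SP(E)`. -/
abbrev SP (s : G.V) : Type := (G.spCon s).Quotient

/-- The class in `SP(E)` of an element of the free commutative monoid on the vertices. -/
def spMk (s : G.V) (a : Multiset G.V) : G.SP s := (G.spCon s).mk' a

/-- The one-step toppling/reduction relation `→₁` on the free commutative monoid. -/
def step1 (s : G.V) : Multiset G.V → Multiset G.V → Prop := fun a b =>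
  (s ∈ a ∧ b = a.filter fun v => v ≠ s) ∨
    ∃ v : G.V, ¬ G.IsSink v ∧ (G.outEdges v).card ≤ a.count v ∧
      b = (a - Multiset.replicate (G.outEdges v).card v) + (G.outEdges v).val.map G.rng

/-- The reflexive transitive closure `→` of `→₁`. -/
def Transforms (s : G.V) : Multiset G.V → Multiset G.V → Prop :=
  Relation.ReflTransGen (G.step1 s)

/-- The image in `SP(E)` of the canonical embedding of `SP(E_H)`: classes of multisets
supported in `H`. -/
def spImage (s : G.V) (H : Finset G.V) : Set (G.SP s) :=
  Set.range fun a : Multiset {v : G.V // v ∈ H} => G.spMk s (a.map Subtype.val)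

open Classical in
/-- The set `S_E` of vertices from which no cycle is reachable. -/
noncomputable def sinkSet : Finset G.V :=
  Finset.univ.filter fun v => ¬ ∃ u, G.Reaches v u ∧ G.OnCycle u

/-- Mutual reachability. -/
def MutReach (u v : G.V) : Prop := G.Reaches u v ∧ G.Reaches v u

open Classical in
/-- The strongly connected component of a vertex. -/
noncomputable def scc (v : G.V) : Finset G.V := Finset.univ.filter fun u => G.MutReach v u

/-- The set `𝓒_E` of (vertex sets of) strongly connected cyclic components. -/
def cyclicComps : Set (Finset G.V) := {C | ∃ v : G.V, G.OnCycle v ∧ C = G.scc v}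

/-- The order on components: `C ≤ C'` iff there is a path from a vertex of `C` to a
vertex of `C'`. -/
def compLe (C C' : Finset G.V) : Prop := ∃ u ∈ C, ∃ w ∈ C', G.Reaches u w

/-- A filter of the poset `𝓒_E`. -/
def IsFilter (F : Set (Finset G.V)) : Prop :=
  F ⊆ G.cyclicComps ∧ ∀ C ∈ F, ∀ C' ∈ G.cyclicComps, G.compLe C C' → C' ∈ F

open Classical in
/-- The hereditary saturated closure of a set of vertices: the intersection (hence the
smallest) of all saturated hereditary subsets containing it. -/
noncomputable def hsClosure (X : Finset G.V) : Finset G.V :=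
  Finset.univ.filter fun v =>
    ∀ H : Finset G.V, G.Hereditary H → G.Saturated H → X ⊆ H → v ∈ H

open Classical in
/-- The union of a collection of components, as a finset of vertices. -/
noncomputable def compUnion (F : Set (Finset G.V)) : Finset G.V :=
  Finset.univ.filter fun v => ∃ C ∈ F, v ∈ C

/-- The poset `𝓗^s_E = {S_E} ∪ {H_C : C ∈ 𝓒_E}`. -/
def HsE : Set (Finset G.V) :=
  insert G.sinkSet {H | ∃ C ∈ G.cyclicComps, H = G.hsClosure C}

/-- An ideal of the poset `𝓗^s_E`. -/
def IsHsIdeal (I : Set (Finset G.V)) : Prop :=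
  I.Nonempty ∧ I ⊆ G.HsE ∧ ∀ x ∈ I, ∀ y ∈ G.HsE, y ⊆ x → y ∈ I

lemma hsClosure_hereditary (X : Finset G.V) : G.Hereditary (G.hsClosure X) := by
  classical
  intro e he
  simp only [hsClosure, Finset.mem_filter, Finset.mem_univ, true_and] at he ⊢
  have he' := he
  exact fun H hher hsat hX => hher e (he' H hher hsat hX)

end DGraph
namespace SPAux
open Multiset Relation

variable (G : DGraph) (s : G.V)

/-- count-based helper: subtraction commutes with adding on the right. -/
lemma msub_add_right {α : Type} [DecidableEq α] {r a : Multiset α} (c : Multiset α)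
    (h : r ≤ a) : (a + c) - r = (a - r) + c := by
  ext x
  have := Multiset.le_iff_count.1 h x
  simp [Multiset.count_sub, Multiset.count_add]
  omega

lemma madd_sub_left {α : Type} [DecidableEq α] {r a : Multiset α} (c : Multiset α)
    (h : r ≤ a) : (a + c) - r = (a - r) + c := msub_add_right c h

/-- One-step toppling with single-sink-chip removal. -/
def RStep (a b : Multiset G.V) : Prop :=
  (s ∈ a ∧ b = a.erase s) ∨
    ∃ v : G.V, ¬ G.IsSink v ∧ (G.outEdges v).card ≤ a.count v ∧
      b = (a - Multiset.replicate (G.outEdges v).card v) + (G.outEdges v).val.map G.rng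

abbrev RT (a b : Multiset G.V) : Prop := Relation.ReflTransGen (RStep G s) a b

lemma outEdges_card_pos {v : G.V} (hv : ¬ G.IsSink v) : 0 < (G.outEdges v).card := by
  rw [Finset.card_pos]
  simp only [DGraph.IsSink, not_forall, not_not] at hv
  obtain ⟨e, he⟩ := hv
  exact ⟨e, by simp [DGraph.outEdges, he]⟩

lemma nonsink_ne_sink (hsink : G.IsSink s) {v : G.V} (hv : ¬ G.IsSink v) : v ≠ s := by
  rintro rfl; exact hv hsink

lemma replicate_le_of_count {v : G.V} {a : Multiset G.V} {n : ℕ} (h : n ≤ a.count v) :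
    Multiset.replicate n v ≤ a := Multiset.le_count_iff_replicate_le.1 h

lemma rstep_con {a b : Multiset G.V} (h : RStep G s a b) : G.spCon s a b := by
  rcases h with ⟨hs, rfl⟩ | ⟨v, hv, hc, rfl⟩
  · have h1 : G.spCon s {s} 0 :=
      AddConGen.Rel.of _ _ (Or.inl ⟨rfl, rfl⟩)
    have h2 : G.spCon s (a.erase s + {s}) (a.erase s + 0) :=
      (G.spCon s).add ((G.spCon s).refl _) h1
    have h3 : a.erase s + {s} = a := by
      rw [add_comm]
      simpa using Multiset.cons_erase hs
    rw [h3, add_zero] at h2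
    exact h2
  · have h1 : G.spCon s (Multiset.replicate (G.outEdges v).card v)
        ((G.outEdges v).val.map G.rng) :=
      AddConGen.Rel.of _ _ (Or.inr ⟨v, hv, rfl, rfl⟩)
    have h2 := (G.spCon s).add ((G.spCon s).refl
      (a - Multiset.replicate (G.outEdges v).card v)) h1
    have h3 : a - Multiset.replicate (G.outEdges v).card v
        + Multiset.replicate (G.outEdges v).card v = a :=
      tsub_add_cancel_of_le (replicate_le_of_count G hc)
    rwa [h3] at h2

lemma rstep_add {a b : Multiset G.V} (c : Multiset G.V) (h : RStep G s a b) :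
    RStep G s (a + c) (b + c) := by
  rcases h with ⟨hs, rfl⟩ | ⟨v, hv, hc, rfl⟩
  · exact Or.inl ⟨Multiset.mem_add.2 (Or.inl hs), (Multiset.erase_add_left_pos c hs).symm⟩
  · refine Or.inr ⟨v, hv, ?_, ?_⟩
    · simp only [Multiset.count_add]; omega
    · rw [msub_add_right c (replicate_le_of_count G hc), add_right_comm]

lemma rt_add {a b : Multiset G.V} (c : Multiset G.V) (h : RT G s a b) :
    RT G s (a + c) (b + c) := by
  induction h with
  | refl => exact Relation.ReflTransGen.refl
  | tail _ h2 ih => exact ih.tail (rstep_add G s c h2)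

lemma rt_add_both {a b c d : Multiset G.V} (h1 : RT G s a b) (h2 : RT G s c d) :
    RT G s (a + c) (b + d) := by
  refine (rt_add G s c h1).trans ?_
  rw [add_comm b c, add_comm b d]
  exact rt_add G s b h2

end SPAux
namespace SPAux
open Multiset Relation

variable (G : DGraph) (s : G.V)

lemma erase_sub {α : Type} [DecidableEq α] {x : α} (a r : Multiset α) (hx : r.count x = 0) :
    (a - r).erase x = a.erase x - r := by
  ext y
  by_cases hxy : y = x
  · subst hxy
    simp [Multiset.count_erase_self, Multiset.count_sub, hx]
  · simp [Multiset.count_erase_of_ne hxy, Multiset.count_sub]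

lemma rstep_conf (hsink : G.IsSink s) {a b c : Multiset G.V}
    (hb : RStep G s a b) (hc : RStep G s a c) :
    b = c ∨ ∃ d, RStep G s b d ∧ RStep G s c d := by
  classical
  rcases hb with ⟨hsb, rfl⟩ | ⟨v, hv, hcv, rfl⟩ <;>
    rcases hc with ⟨hsc, rfl⟩ | ⟨u, hu, hcu, rfl⟩
  · exact Or.inl rfl
  · -- b = erase, c = topple u
    right
    have hus : u ≠ s := nonsink_ne_sink G s hsink hu
    have hcount : (a.erase s).count u = a.count u := Multiset.count_erase_of_ne hus a
    have hru : (Multiset.replicate (G.outEdges u).card u).count s = 0 := by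
      rw [Multiset.count_replicate, if_neg hus]
    refine ⟨(a.erase s - Multiset.replicate (G.outEdges u).card u)
        + (G.outEdges u).val.map G.rng, ?_, ?_⟩
    · exact Or.inr ⟨u, hu, by omega, rfl⟩
    · have hsmem : s ∈ a - Multiset.replicate (G.outEdges u).card u := by
        rw [← Multiset.count_pos, Multiset.count_sub, hru]
        have := Multiset.count_pos.2 hsb
        omega
      refine Or.inl ⟨Multiset.mem_add.2 (Or.inl hsmem), ?_⟩
      rw [Multiset.erase_add_left_pos _ hsmem, erase_sub _ _ hru]
  · -- b = topple v, c = erase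
    right
    have hvs : v ≠ s := nonsink_ne_sink G s hsink hv
    have hcount : (a.erase s).count v = a.count v := Multiset.count_erase_of_ne hvs a
    have hrv : (Multiset.replicate (G.outEdges v).card v).count s = 0 := by
      rw [Multiset.count_replicate, if_neg hvs]
    refine ⟨(a.erase s - Multiset.replicate (G.outEdges v).card v)
        + (G.outEdges v).val.map G.rng, ?_, ?_⟩
    · have hsmem : s ∈ a - Multiset.replicate (G.outEdges v).card v := by
        rw [← Multiset.count_pos, Multiset.count_sub, hrv]
        have := Multiset.count_pos.2 hsc
        omega
      refine Or.inl ⟨Multiset.mem_add.2 (Or.inl hsmem), ?_⟩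
      rw [Multiset.erase_add_left_pos _ hsmem, erase_sub _ _ hrv]
    · exact Or.inr ⟨v, hv, by omega, rfl⟩
  · -- topple v / topple u
    by_cases hvu : v = u
    · subst hvu; exact Or.inl rfl
    right
    set rv := Multiset.replicate (G.outEdges v).card v with hrv
    set ru := Multiset.replicate (G.outEdges u).card u with hru
    set mv := (G.outEdges v).val.map G.rng with hmv
    set mu := (G.outEdges u).val.map G.rng with hmu
    have hcrv : ∀ x, rv.count x = if v = x then (G.outEdges v).card else 0 := by
      intro x; rw [hrv, Multiset.count_replicate]
    have hcru : ∀ x, ru.count x = if u = x then (G.outEdges u).card else 0 := by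
      intro x; rw [hru, Multiset.count_replicate]
    have hle1 : ru ≤ a - rv := Multiset.le_iff_count.2 (fun x => by
      rw [Multiset.count_sub, hcru x, hcrv x]
      by_cases hx : u = x
      · subst hx; rw [if_pos rfl, if_neg hvu]; omega
      · rw [if_neg hx]; omega)
    have hle2 : rv ≤ a - ru := Multiset.le_iff_count.2 (fun x => by
      rw [Multiset.count_sub, hcru x, hcrv x]
      by_cases hx : v = x
      · subst hx; rw [if_pos rfl, if_neg (fun h => hvu h.symm)]; omega
      · rw [if_neg hx]; omega)
    have hcomm : a - rv - ru = a - ru - rv := tsub_right_comm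
    refine ⟨a - rv - ru + mv + mu, ?_, ?_⟩
    · refine Or.inr ⟨u, hu, ?_, ?_⟩
      · rw [Multiset.count_add, Multiset.count_sub, hcrv u, if_neg hvu]
        omega
      · show a - rv - ru + mv + mu = a - rv + mv - ru + mu
        rw [msub_add_right mv hle1]
    · refine Or.inr ⟨v, hv, ?_, ?_⟩
      · rw [Multiset.count_add, Multiset.count_sub, hcru v, if_neg (fun h => hvu h.symm)]
        omega
      · show a - rv - ru + mv + mu = a - ru + mu - rv + mv
        rw [msub_add_right mu hle2, ← hcomm, add_right_comm]

lemma rt_conf (hsink : G.IsSink s) {a b c : Multiset G.V}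
    (hb : RT G s a b) (hc : RT G s a c) : ∃ d, RT G s b d ∧ RT G s c d := by
  have h := Relation.church_rosser (r := RStep G s) ?_ hb hc
  · exact h
  · intro a b c h1 h2
    rcases rstep_conf G s hsink h1 h2 with rfl | ⟨d, hd1, hd2⟩
    · exact ⟨b, Relation.ReflGen.refl, Relation.ReflTransGen.refl⟩
    · exact ⟨d, Relation.ReflGen.single hd1, Relation.ReflTransGen.single hd2⟩

lemma rt_spCon {a b : Multiset G.V} (h : RT G s a b) : G.spCon s a b := by
  induction h with
  | refl => exact (G.spCon s).refl _
  | tail _ h2 ih => exact (G.spCon s).trans ih (rstep_con G s h2)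

/-- The joinability relation as an additive congruence. -/
def joinCon (hsink : G.IsSink s) : AddCon (Multiset G.V) where
  r a b := ∃ c, RT G s a c ∧ RT G s b c
  iseqv := by
    constructor
    · exact fun a => ⟨a, Relation.ReflTransGen.refl, Relation.ReflTransGen.refl⟩
    · rintro a b ⟨c, h1, h2⟩; exact ⟨c, h2, h1⟩
    · rintro a b c ⟨d, h1, h2⟩ ⟨e, h3, h4⟩
      obtain ⟨f, hf1, hf2⟩ := rt_conf G s hsink h2 h3
      exact ⟨f, h1.trans hf1, h4.trans hf2⟩
  add' := by
    rintro a b c d ⟨e, h1, h2⟩ ⟨f, h3, h4⟩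
    exact ⟨e + f, rt_add_both G s h1 h3, rt_add_both G s h2 h4⟩

lemma spCon_iff_rt (hsink : G.IsSink s) {a b : Multiset G.V} :
    G.spCon s a b ↔ ∃ c, RT G s a c ∧ RT G s b c := by
  constructor
  · intro h
    refine (AddCon.addConGen_le (c := joinCon G s hsink)).2 ?_ h
    rintro x y (⟨rfl, rfl⟩ | ⟨v, hv, rfl, rfl⟩)
    · refine ⟨0, Relation.ReflTransGen.single (Or.inl ⟨Multiset.mem_singleton_self s, ?_⟩),
        Relation.ReflTransGen.refl⟩
      simp
    · refine ⟨(G.outEdges v).val.map G.rng,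
        Relation.ReflTransGen.single (Or.inr ⟨v, hv, ?_, ?_⟩), Relation.ReflTransGen.refl⟩
      · simp [Multiset.count_replicate]
      · simp
  · rintro ⟨c, h1, h2⟩
    exact (G.spCon s).trans (rt_spCon G s h1) ((G.spCon s).symm (rt_spCon G s h2))

lemma spMk_eq_iff (hsink : G.IsSink s) {a b : Multiset G.V} :
    G.spMk s a = G.spMk s b ↔ ∃ c, RT G s a c ∧ RT G s b c := by
  rw [← spCon_iff_rt G s hsink]
  exact AddCon.eq _

lemma spMk_add (a b : Multiset G.V) :
    G.spMk s (a + b) = G.spMk s a + G.spMk s b := map_add _ _ _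

lemma spMk_surjective : Function.Surjective (G.spMk s) := AddCon.mk'_surjective

end SPAux
namespace SPAux
open Multiset Relation

variable (G : DGraph) (s : G.V)

lemma mem_of_topple {v : G.V} {a : Multiset G.V} (hv : ¬ G.IsSink v)
    (hc : (G.outEdges v).card ≤ a.count v) : v ∈ a := by
  rw [← Multiset.count_pos]
  have := outEdges_card_pos G hv
  omega

section Invariants

variable (H : Finset G.V)

lemma rstep_subH (hher : G.Hereditary H) {a b : Multiset G.V} (h : RStep G s a b)
    (ha : ∀ x ∈ a, x ∈ H) : ∀ x ∈ b, x ∈ H := by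
  rcases h with ⟨hs, rfl⟩ | ⟨v, hv, hc, rfl⟩
  · exact fun x hx => ha x (Multiset.mem_of_mem_erase hx)
  · intro x hx
    rcases Multiset.mem_add.1 hx with hx | hx
    · exact ha x (Multiset.mem_of_le (tsub_le_self) hx)
    · obtain ⟨e, he, rfl⟩ := Multiset.mem_map.1 hx
      have hsrc : G.src e = v := by
        have := Finset.mem_filter.1 he
        simpa [DGraph.outEdges] using this.2
      exact hher e (by rw [hsrc]; exact ha v (mem_of_topple G hv hc))

lemma rt_subH (hher : G.Hereditary H) {a b : Multiset G.V} (h : RT G s a b)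
    (ha : ∀ x ∈ a, x ∈ H) : ∀ x ∈ b, x ∈ H := by
  induction h with
  | refl => exact ha
  | tail _ h2 ih => exact rstep_subH G s H hher h2 ih

lemma rstep_notsubH (hsat : G.Saturated H) (hsH : s ∈ H) {a b : Multiset G.V}
    (h : RStep G s a b) (ha : ∃ x ∈ a, x ∉ H) : ∃ x ∈ b, x ∉ H := by
  classical
  obtain ⟨x, hxa, hxH⟩ := ha
  rcases h with ⟨hs, rfl⟩ | ⟨v, hv, hc, rfl⟩
  · have hxs : x ≠ s := fun h => hxH (h ▸ hsH)
    exact ⟨x, (Multiset.mem_erase_of_ne hxs).2 hxa, hxH⟩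
  · by_cases hvH : v ∈ H
    · have hxv : x ≠ v := fun h => hxH (h ▸ hvH)
      refine ⟨x, Multiset.mem_add.2 (Or.inl ?_), hxH⟩
      rw [← Multiset.count_pos, Multiset.count_sub, Multiset.count_replicate,
        if_neg (fun h => hxv h.symm)]
      have := Multiset.count_pos.2 hxa
      omega
    · have : ¬ ∀ e : G.E, G.src e = v → G.rng e ∈ H := fun hall => hvH (hsat v hv hall)
      push_neg at this
      obtain ⟨e, hesrc, hern⟩ := this
      refine ⟨G.rng e, Multiset.mem_add.2 (Or.inr ?_), hern⟩
      exact Multiset.mem_map_of_mem _ (by simp [DGraph.outEdges, hesrc])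

lemma rt_notsubH (hsat : G.Saturated H) (hsH : s ∈ H) {a b : Multiset G.V}
    (h : RT G s a b) (ha : ∃ x ∈ a, x ∉ H) : ∃ x ∈ b, x ∉ H := by
  induction h with
  | refl => exact ha
  | tail _ h2 ih => exact rstep_notsubH G s H hsat hsH h2 ih

end Invariants

section Lift

variable (H : Finset G.V) (hher : G.Hereditary H) (hs : s ∈ H)

lemma map_sub_inj {α β : Type} [DecidableEq α] [DecidableEq β] (f : α → β)
    (hf : Function.Injective f) (a b : Multiset α) :
    (a - b).map f = a.map f - b.map f := by
  ext x
  by_cases hx : ∃ y, f y = x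
  · obtain ⟨y, rfl⟩ := hx
    rw [Multiset.count_map_eq_count' f _ hf, Multiset.count_sub, Multiset.count_sub,
      Multiset.count_map_eq_count' f _ hf, Multiset.count_map_eq_count' f _ hf]
  · have h0 : ∀ m : Multiset α, (m.map f).count x = 0 := fun m => by
      rw [Multiset.count_eq_zero]
      intro hmem
      obtain ⟨y, _, hy⟩ := Multiset.mem_map.1 hmem
      exact hx ⟨y, hy⟩
    rw [h0, Multiset.count_sub, h0, h0]

lemma restrict_outEdges_image (v : (G.restrict H hher).V) :
    ((G.restrict H hher).outEdges v).image Subtype.val = G.outEdges v.1 := by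
  ext e
  erw [Finset.mem_image]
  simp only [DGraph.outEdges, Finset.mem_filter, Finset.mem_univ, true_and]
  constructor
  · rintro ⟨ee, hee, rfl⟩
    have : (G.restrict H hher).src ee = v := (@Finset.mem_filter _ (fun e => (G.restrict H hher).src e = v) (fun _ => DGraph.decV _ _ _) _ _).1 hee |>.2
    exact congrArg Subtype.val this
  · intro he
    have heH : G.src e ∈ H := he ▸ v.2
    exact ⟨⟨e, heH⟩, (@Finset.mem_filter _ (fun e => (G.restrict H hher).src e = v) (fun _ => DGraph.decV _ _ _) _ _).2 ⟨Finset.mem_univ _, Subtype.ext he⟩, rfl⟩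

lemma restrict_outEdges_val (v : (G.restrict H hher).V) :
    ((G.restrict H hher).outEdges v).val.map Subtype.val = (G.outEdges v.1).val := by
  erw [← Finset.image_val_of_injOn (Subtype.val_injective.injOn),
    restrict_outEdges_image]

lemma restrict_outEdges_card (v : (G.restrict H hher).V) :
    ((G.restrict H hher).outEdges v).card = (G.outEdges v.1).card := by
  have := congrArg Multiset.card (restrict_outEdges_val G H hher v)
  erw [Multiset.card_map] at this
  exact this

lemma restrict_ranges (v : (G.restrict H hher).V) :
    (((G.restrict H hher).outEdges v).val.map (G.restrict H hher).rng).map Subtype.val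
      = (G.outEdges v.1).val.map G.rng := by
  erw [Multiset.map_map, ← restrict_outEdges_val G H hher v, Multiset.map_map]
  rfl

lemma restrict_nonsink {v : (G.restrict H hher).V} (hv : ¬ G.IsSink v.1) :
    ¬ (G.restrict H hher).IsSink v := by
  simp only [DGraph.IsSink, not_forall, not_not] at hv ⊢
  obtain ⟨e, he⟩ := hv
  exact ⟨⟨e, he ▸ v.2⟩, Subtype.ext he⟩

lemma restrict_nonsink' {v : (G.restrict H hher).V} (hv : ¬ (G.restrict H hher).IsSink v) :
    ¬ G.IsSink v.1 := by
  simp only [DGraph.IsSink, not_forall, not_not] at hv ⊢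
  obtain ⟨e, he⟩ := hv
  exact ⟨e.1, congrArg Subtype.val he⟩

lemma count_map_val (a : Multiset (G.restrict H hher).V) (v : (G.restrict H hher).V) :
    (a.map Subtype.val).count v.1 = a.count v :=
  Multiset.count_map_eq_count' _ _ Subtype.val_injective _

lemma lift_step {a b : Multiset (G.restrict H hher).V}
    (h : RStep (G.restrict H hher) ⟨s, hs⟩ a b) :
    RStep G s (a.map Subtype.val) (b.map Subtype.val) := by
  rcases h with ⟨hmem, rfl⟩ | ⟨v, hv, hc, rfl⟩
  · refine Or.inl ⟨Multiset.mem_map_of_mem _ hmem, ?_⟩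
    erw [Multiset.map_erase _ Subtype.val_injective]
  · refine Or.inr ⟨v.1, restrict_nonsink' G H hher hv, ?_, ?_⟩
    · rw [count_map_val, ← restrict_outEdges_card G H hher v]
      exact hc
    · erw [Multiset.map_add, map_sub_inj _ Subtype.val_injective, Multiset.map_replicate,
        restrict_ranges G H hher v, ← restrict_outEdges_card G H hher v]

lemma unlift_step {a : Multiset (G.restrict H hher).V} {c : Multiset G.V}
    (h : RStep G s (a.map Subtype.val) c) :
    ∃ b, c = b.map Subtype.val ∧ RStep (G.restrict H hher) ⟨s, hs⟩ a b := by
  rcases h with ⟨hmem, rfl⟩ | ⟨v, hv, hc, rfl⟩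
  · obtain ⟨x, hxa, hxs⟩ := Multiset.mem_map.1 hmem
    have hx : x = ⟨s, hs⟩ := Subtype.ext hxs
    subst hx
    refine ⟨a.erase ⟨s, hs⟩, ?_, Or.inl ⟨hxa, rfl⟩⟩
    erw [Multiset.map_erase _ Subtype.val_injective]
  · have hvmem : v ∈ a.map Subtype.val := mem_of_topple G hv hc
    obtain ⟨x, hxa, hxv⟩ := Multiset.mem_map.1 hvmem
    have hvH : v ∈ H := hxv ▸ x.2
    set vv : (G.restrict H hher).V := ⟨v, hvH⟩ with hvv
    refine ⟨a - Multiset.replicate ((G.restrict H hher).outEdges vv).card vv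
        + ((G.restrict H hher).outEdges vv).val.map (G.restrict H hher).rng, ?_, ?_⟩
    · erw [Multiset.map_add, map_sub_inj _ Subtype.val_injective, Multiset.map_replicate,
        restrict_ranges G H hher vv, restrict_outEdges_card G H hher vv]
    · refine Or.inr ⟨vv, restrict_nonsink G H hher hv, ?_, rfl⟩
      rw [restrict_outEdges_card G H hher vv, ← count_map_val G H hher a vv]
      exact hc

lemma lift_rt {a b : Multiset (G.restrict H hher).V}
    (h : RT (G.restrict H hher) ⟨s, hs⟩ a b) :
    RT G s (a.map Subtype.val) (b.map Subtype.val) := by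
  induction h with
  | refl => exact Relation.ReflTransGen.refl
  | tail _ h2 ih => exact ih.tail (lift_step G s H hher hs h2)

lemma unlift_rt {a : Multiset (G.restrict H hher).V} {c : Multiset G.V}
    (h : RT G s (a.map Subtype.val) c) :
    ∃ b, c = b.map Subtype.val ∧ RT (G.restrict H hher) ⟨s, hs⟩ a b := by
  induction h with
  | refl => exact ⟨a, rfl, Relation.ReflTransGen.refl⟩
  | tail _ h2 ih =>
    obtain ⟨b₁, rfl, hb₁⟩ := ih
    obtain ⟨b₂, rfl, hb₂⟩ := unlift_step G s H hher hs h2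
    exact ⟨b₂, rfl, hb₁.tail hb₂⟩

lemma restrict_sink : (G.restrict H hher).IsSink ⟨s, hs⟩ ↔ G.IsSink s := by
  constructor
  · intro h e he
    exact h ⟨e, he ▸ hs⟩ (Subtype.ext he)
  · intro h e he
    exact h e.1 (congrArg Subtype.val he)

lemma spMk_map_eq_iff (hsink : G.IsSink s) (a b : Multiset (G.restrict H hher).V) :
    G.spMk s (a.map Subtype.val) = G.spMk s (b.map Subtype.val)
      ↔ (G.restrict H hher).spMk ⟨s, hs⟩ a = (G.restrict H hher).spMk ⟨s, hs⟩ b := by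
  rw [spMk_eq_iff G s hsink, spMk_eq_iff (G.restrict H hher) ⟨s, hs⟩
    ((restrict_sink G s H hher hs).2 hsink)]
  constructor
  · rintro ⟨c, h1, h2⟩
    obtain ⟨c₁, rfl, hc₁⟩ := unlift_rt G s H hher hs h1
    obtain ⟨c₂, hc, hc₂⟩ := unlift_rt G s H hher hs h2
    have : c₂ = c₁ := Multiset.map_injective Subtype.val_injective hc.symm
    exact ⟨c₁, hc₁, this ▸ hc₂⟩
  · rintro ⟨c, h1, h2⟩
    exact ⟨c.map Subtype.val, lift_rt G s H hher hs h1, lift_rt G s H hher hs h2⟩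

end Lift
end SPAux
namespace SPAux
open Multiset Relation

lemma sum_map_le {α : Type} (m : Multiset α) (f : α → ℕ) (A : ℕ) (h : ∀ e ∈ m, f e ≤ A) :
    (m.map f).sum ≤ Multiset.card m * A := by
  induction m using Multiset.induction with
  | empty => simp
  | cons x m ih =>
    simp only [Multiset.map_cons, Multiset.sum_cons, Multiset.card_cons]
    have h1 := h x (Multiset.mem_cons_self x m)
    have h2 := ih (fun e he => h e (Multiset.mem_cons_of_mem he))
    have : (Multiset.card m + 1) * A = Multiset.card m * A + A := by ring
    omega

lemma sum_map_sub {α : Type} (m : Multiset α) (f : α → ℕ) (A : ℕ) (h : ∀ e ∈ m, f e ≤ A) :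
    (m.map (fun e => A - f e)).sum = Multiset.card m * A - (m.map f).sum := by
  induction m using Multiset.induction with
  | empty => simp
  | cons x m ih =>
    simp only [Multiset.map_cons, Multiset.sum_cons, Multiset.card_cons]
    have h1 := h x (Multiset.mem_cons_self x m)
    have h2 := ih (fun e he => h e (Multiset.mem_cons_of_mem he))
    have h3 := sum_map_le m f A (fun e he => h e (Multiset.mem_cons_of_mem he))
    have : (Multiset.card m + 1) * A = Multiset.card m * A + A := by ring
    omega


section Fin
variable (G : DGraph) (s : G.V)

def reachN : ℕ → G.V → Prop
  | 0, v => v = s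
  | n+1, v => ∃ e : G.E, G.src e = v ∧ reachN n (G.rng e)

lemma reach_exists (hr : ∀ v : G.V, G.Reaches v s) (v : G.V) : ∃ n, reachN G s n v := by
  refine Relation.ReflTransGen.head_induction_on (hr v) ⟨0, rfl⟩ ?_
  rintro x y ⟨e, hesrc, hern⟩ _ ⟨n, hn⟩
  exact ⟨n + 1, e, hesrc, hern ▸ hn⟩

open Classical in
noncomputable def dist (hr : ∀ v : G.V, G.Reaches v s) (v : G.V) : ℕ :=
  Nat.find (reach_exists G s hr v)

variable (hr : ∀ v : G.V, G.Reaches v s)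

include hr

open Classical in
lemma dist_spec (v : G.V) : reachN G s (dist G s hr v) v :=
  Nat.find_spec (reach_exists G s hr v)

open Classical in
lemma dist_min {v : G.V} {n : ℕ} (h : reachN G s n v) : dist G s hr v ≤ n :=
  Nat.find_min' (reach_exists G s hr v) h

lemma dist_s : dist G s hr s = 0 :=
  Nat.le_zero.1 (dist_min G s hr rfl)

lemma dist_pos {v : G.V} (hv : v ≠ s) : 0 < dist G s hr v := by
  rcases Nat.eq_zero_or_pos (dist G s hr v) with h | h
  · have h0 := dist_spec G s hr v
    rw [h] at h0
    exact absurd h0 hv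
  · exact h

lemma dist_step {v : G.V} (hv : v ≠ s) :
    ∃ e : G.E, G.src e = v ∧ dist G s hr (G.rng e) ≤ dist G s hr v - 1 := by
  have hpos := dist_pos G s hr hv
  have hspec := dist_spec G s hr v
  obtain ⟨m, hm⟩ : ∃ m, dist G s hr v = m + 1 := ⟨dist G s hr v - 1, by omega⟩
  rw [hm] at hspec
  obtain ⟨e, he1, he2⟩ := hspec
  exact ⟨e, he1, by have := dist_min G s hr he2; omega⟩

noncomputable def bigD : ℕ := Finset.univ.sup (dist G s hr)

noncomputable def bigK : ℕ := Finset.univ.sup (fun v => (G.outEdges v).card) + 2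

noncomputable def wt (v : G.V) : ℕ :=
  bigK G ^ bigD G s hr - bigK G ^ (bigD G s hr - dist G s hr v)

lemma wt_s : wt G s hr s = 0 := by
  simp [wt, dist_s G s hr]

lemma topple_dec (hsink : G.IsSink s) {v : G.V} (hv : ¬ G.IsSink v) :
    (((G.outEdges v).val.map G.rng).map (wt G s hr)).sum
      < (G.outEdges v).card * wt G s hr v := by
  classical
  set D := bigD G s hr with hD
  set K := bigK G with hK
  have hK2 : 2 ≤ K := by rw [hK, bigK]; omega
  have hdegK : (G.outEdges v).card < K := by
    have : (G.outEdges v).card ≤ Finset.univ.sup (fun v => (G.outEdges v).card) :=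
      Finset.le_sup (f := fun v => (G.outEdges v).card) (Finset.mem_univ v)
    rw [hK, bigK]; omega
  have hvs : v ≠ s := nonsink_ne_sink G s hsink hv
  have hdle : ∀ u : G.V, dist G s hr u ≤ D := fun u => Finset.le_sup (Finset.mem_univ u)
  have hpowle : ∀ u : G.V, K ^ (D - dist G s hr u) ≤ K ^ D :=
    fun u => Nat.pow_le_pow_right (by omega) (by omega)
  -- rewrite the sum
  rw [Multiset.map_map]
  have hsum : ((G.outEdges v).val.map ((wt G s hr) ∘ G.rng)).sum
      = Multiset.card (G.outEdges v).val * K ^ D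
        - ((G.outEdges v).val.map (fun e => K ^ (D - dist G s hr (G.rng e)))).sum := by
    have := sum_map_sub (G.outEdges v).val (fun e => K ^ (D - dist G s hr (G.rng e)))
      (K ^ D) (fun e _ => hpowle (G.rng e))
    rw [← this]
    rfl
  rw [hsum]
  set S := ((G.outEdges v).val.map (fun e => K ^ (D - dist G s hr (G.rng e)))).sum with hS
  have hSle : S ≤ Multiset.card (G.outEdges v).val * K ^ D :=
    sum_map_le _ _ _ (fun e _ => hpowle (G.rng e))
  -- lower bound on S
  obtain ⟨e₀, he₀src, he₀d⟩ := dist_step G s hr hvs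
  have he₀mem : e₀ ∈ (G.outEdges v).val := by simp [DGraph.outEdges, he₀src]
  have hterm : K ^ (D - dist G s hr (G.rng e₀)) ∈
      (G.outEdges v).val.map (fun e => K ^ (D - dist G s hr (G.rng e))) :=
    Multiset.mem_map_of_mem _ he₀mem
  have hSge : K ^ (D - dist G s hr (G.rng e₀)) ≤ S :=
    Multiset.single_le_sum (fun x _ => Nat.zero_le x) _ hterm
  have hexp : D - dist G s hr v + 1 ≤ D - dist G s hr (G.rng e₀) := by
    have h1 := dist_pos G s hr hvs
    have h2 := hdle v
    omega
  have hpow : K ^ (D - dist G s hr v + 1) ≤ K ^ (D - dist G s hr (G.rng e₀)) :=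
    Nat.pow_le_pow_right (by omega) hexp
  have hKB : K ^ (D - dist G s hr v + 1) = K * K ^ (D - dist G s hr v) := by
    rw [pow_succ, mul_comm]
  have hBpos : 0 < K ^ (D - dist G s hr v) := Nat.pow_pos (by omega)
  have hSgt : Multiset.card (G.outEdges v).val * K ^ (D - dist G s hr v) < S := by
    have h1 : Multiset.card (G.outEdges v).val * K ^ (D - dist G s hr v)
        < K * K ^ (D - dist G s hr v) := by
      have hc : Multiset.card (G.outEdges v).val = (G.outEdges v).card := rfl
      exact Nat.mul_lt_mul_of_pos_right (hc ▸ hdegK) hBpos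
    omega
  -- conclude
  have hwt : wt G s hr v = K ^ D - K ^ (D - dist G s hr v) := rfl
  rw [hwt]
  have hcard : (G.outEdges v).card = Multiset.card (G.outEdges v).val := rfl
  rw [hcard, Nat.mul_sub]
  have key : ∀ x y z : ℕ, y < z → z ≤ x → x - z < x - y := by intro x y z h1 h2; omega
  exact key _ _ _ hSgt hSle

noncomputable def measureM (a : Multiset G.V) : ℕ :=
  2 * (a.map (wt G s hr)).sum + Multiset.card a

lemma rstep_measure (hsink : G.IsSink s) {a b : Multiset G.V} (h : RStep G s a b) :
    measureM G s hr b < measureM G s hr a := by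
  rcases h with ⟨hs, rfl⟩ | ⟨v, hv, hc, rfl⟩
  · have h1 : a = s ::ₘ a.erase s := (Multiset.cons_erase hs).symm
    have h2 : (a.map (wt G s hr)).sum
        = wt G s hr s + ((a.erase s).map (wt G s hr)).sum := by
      conv_lhs => rw [h1]
      simp
    have h3 : Multiset.card a = Multiset.card (a.erase s) + 1 := by
      conv_lhs => rw [h1]; simp
    rw [measureM, measureM, h2, wt_s G s hr]
    omega
  · set r := Multiset.replicate (G.outEdges v).card v with hr'
    have hle : r ≤ a := replicate_le_of_count G hc
    have h1 : a = (a - r) + r := (tsub_add_cancel_of_le hle).symm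
    have h2 : (a.map (wt G s hr)).sum
        = ((a - r).map (wt G s hr)).sum + (G.outEdges v).card * wt G s hr v := by
      conv_lhs => rw [h1]
      rw [Multiset.map_add, Multiset.sum_add, hr', Multiset.map_replicate,
        Multiset.sum_replicate, smul_eq_mul]
    have h3 : Multiset.card a = Multiset.card (a - r) + (G.outEdges v).card := by
      conv_lhs => rw [h1]
      rw [Multiset.card_add, hr', Multiset.card_replicate]
    have h4 := topple_dec G s hr hsink hv
    rw [measureM, measureM, h2, h3, Multiset.map_add, Multiset.sum_add,
      Multiset.card_add, Multiset.map_map]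
    have h5 : Multiset.card (Multiset.map G.rng (G.outEdges v).val) = (G.outEdges v).card := by
      simp
    rw [h5]
    have h6 : ((G.outEdges v).val.map ((wt G s hr) ∘ G.rng)).sum
        = (((G.outEdges v).val.map G.rng).map (wt G s hr)).sum := by
      rw [Multiset.map_map]
    omega

lemma exists_stable_aux (hsink : G.IsSink s) :
    ∀ n, ∀ a : Multiset G.V, measureM G s hr a ≤ n →
      ∃ b, RT G s a b ∧ ∀ c, ¬ RStep G s b c := by
  intro n
  induction n with
  | zero =>
    intro a ha
    refine ⟨a, Relation.ReflTransGen.refl, fun c hc => ?_⟩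
    have := rstep_measure G s hr hsink hc
    omega
  | succ n ih =>
    intro a ha
    by_cases hstep : ∃ c, RStep G s a c
    · obtain ⟨c, hc⟩ := hstep
      have := rstep_measure G s hr hsink hc
      obtain ⟨b, h1, h2⟩ := ih c (by omega)
      exact ⟨b, Relation.ReflTransGen.head hc h1, h2⟩
    · exact ⟨a, Relation.ReflTransGen.refl, fun c hc => hstep ⟨c, hc⟩⟩

lemma exists_stable (hsink : G.IsSink s) (a : Multiset G.V) :
    ∃ b, RT G s a b ∧ ∀ c, ¬ RStep G s b c :=
  exists_stable_aux G s hr hsink (measureM G s hr a) a le_rfl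

omit hr in
lemma stable_count (hsand : G.IsSandpile s) {b : Multiset G.V}
    (hb : ∀ c, ¬ RStep G s b c) (v : G.V) :
    b.count v ≤ Finset.univ.sup (fun v => (G.outEdges v).card) := by
  by_cases hv : G.IsSink v
  · have hvs : v = s := hsand.2.1 v hv
    subst hvs
    have : v ∉ b := fun hmem => hb (b.erase v) (Or.inl ⟨hmem, rfl⟩)
    rw [Multiset.count_eq_zero.2 this]
    exact Nat.zero_le _
  · have : ¬ (G.outEdges v).card ≤ b.count v := fun hle =>
      hb _ (Or.inr ⟨v, hv, hle, rfl⟩)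
    have hsup : (G.outEdges v).card ≤ Finset.univ.sup (fun v => (G.outEdges v).card) :=
      Finset.le_sup (f := fun v => (G.outEdges v).card) (Finset.mem_univ v)
    omega

omit hr in
lemma finite_SP (hsand : G.IsSandpile s) : Finite (G.SP s) := by
  classical
  set C := Finset.univ.sup (fun v => (G.outEdges v).card) with hC
  set f : (G.V → Fin (C + 1)) → G.SP s :=
    fun g => G.spMk s (∑ v : G.V, Multiset.replicate (g v).1 v) with hf
  refine Finite.of_surjective f ?_
  intro x
  obtain ⟨a, rfl⟩ := spMk_surjective G s x
  obtain ⟨b, hab, hb⟩ := exists_stable G s hsand.2.2 hsand.1 a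
  have hcount := stable_count G s hsand hb
  refine ⟨fun v => ⟨b.count v, by have := hcount v; omega⟩, ?_⟩
  have hrepr : (∑ v : G.V, Multiset.replicate (b.count v) v) = b := by
    ext x
    rw [Multiset.count_sum']
    rw [Finset.sum_eq_single x]
    · simp
    · intro u _ hux
      rw [Multiset.count_replicate, if_neg hux]
    · intro hx
      exact absurd (Finset.mem_univ x) hx
  show G.spMk s (∑ v : G.V, Multiset.replicate (b.count v) v) = G.spMk s a
  rw [hrepr]
  exact ((spMk_eq_iff G s hsand.1).2 ⟨b, Relation.ReflTransGen.refl, hab⟩)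

end Fin

lemma exists_idem_nsmul {M : Type} [AddCommMonoid M] [Finite M] (a : M) :
    ∃ k : ℕ, 0 < k ∧ k • a + k • a = k • a := by
  obtain ⟨i, j, hne, heq⟩ := Finite.exists_ne_map_eq_of_infinite (fun n : ℕ => (n + 1) • a)
  wlog hij : i < j generalizing i j
  · exact this j i hne.symm heq.symm (by omega)
  set n := i + 1 with hn
  set p := j - i with hp
  have hp1 : 0 < p := by omega
  have hnp : j + 1 = n + p := by omega
  have heq' : n • a = (n + p) • a := by rw [← hnp]; exact heq
  have key : ∀ m, n ≤ m → m • a = (m + p) • a := by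
    intro m hm
    have h1 : m = (m - n) + n := by omega
    have h2 : m + p = (m - n) + (n + p) := by omega
    rw [h1, add_nsmul, heq', ← add_nsmul]
    congr 1
    omega
  have key2 : ∀ t, (n * p + t * p) • a = (n * p) • a := by
    intro t
    induction t with
    | zero => simp
    | succ t ih =>
      have h1 : n * p + (t + 1) * p = (n * p + t * p) + p := by ring
      rw [h1, ← key (n * p + t * p) (by nlinarith), ih]
  refine ⟨n * p, by positivity, ?_⟩
  have h2 : n * p + n * p = n * p + n * p := rfl
  calc (n * p) • a + (n * p) • a = (n * p + n * p) • a := by rw [add_nsmul]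
    _ = (n * p + n * p) • a := rfl
    _ = (n * p) • a := by rw [key2 n]
end SPAux

namespace SPAux

lemma exists_lift {α : Type} [DecidableEq α] (P : α → Prop) (m : Multiset α)
    (hm : ∀ u ∈ m, P u) : ∃ a : Multiset {v : α // P v}, a.map Subtype.val = m := by
  induction m using Multiset.induction with
  | empty => exact ⟨0, rfl⟩
  | cons x m ih =>
    obtain ⟨a, ha⟩ := ih (fun u hu => hm u (Multiset.mem_cons_of_mem hu))
    exact ⟨⟨x, hm x (Multiset.mem_cons_self x m)⟩ ::ₘ a, by simp [ha]⟩

end SPAux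

set_option maxHeartbeats 1000000 in
/-- For a nonempty saturated hereditary subset `H` and `z_H` the sum of
all idempotents of `SP(E_H)`: `z_H + SP(E_H)` is the set of recurrent elements of
`SP(E_H)`, this set is an abelian group with identity `z_H`, and its image in `SP(E)`
under the canonical embedding is a maximal subgroup of `SP(E)`. -/
theorem recurrent_group_maximal (G : DGraph) (s : G.V) (hG : G.IsSandpile s)
    (H : Finset G.V) (hne : H.Nonempty) (hher : G.Hereditary H) (hsat : G.Saturated H)
    (hs : s ∈ H)
    (T : Finset ((G.restrict H hher).SP ⟨s, hs⟩))
    (hT : ∀ y : (G.restrict H hher).SP ⟨s, hs⟩, y ∈ T ↔ y + y = y) :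
    ({y : (G.restrict H hher).SP ⟨s, hs⟩ | ∃ a, y = T.sum id + a}
        = {y : (G.restrict H hher).SP ⟨s, hs⟩ | Recurrent y}) ∧
    (∀ a b : (G.restrict H hher).SP ⟨s, hs⟩,
        Recurrent a → Recurrent b → Recurrent (a + b)) ∧
    Recurrent (T.sum id) ∧
    (∀ a : (G.restrict H hher).SP ⟨s, hs⟩, Recurrent a → T.sum id + a = a) ∧
    (∀ a : (G.restrict H hher).SP ⟨s, hs⟩, Recurrent a →
        ∃ b, Recurrent b ∧ a + b = T.sum id) ∧
    IsMaximalSubgroup {x : G.SP s | ∃ a : Multiset {v : G.V // v ∈ H},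
      Recurrent ((G.restrict H hher).spMk ⟨s, hs⟩ a) ∧ x = G.spMk s (a.map Subtype.val)} := by
  classical
  obtain ⟨hsink, huniq, hreach⟩ := hG
  have hsinkH : (G.restrict H hher).IsSink ⟨s, hs⟩ :=
    (SPAux.restrict_sink G s H hher hs).2 hsink
  have hreachH : ∀ v : (G.restrict H hher).V, (G.restrict H hher).Reaches v ⟨s, hs⟩ := by
    rintro ⟨v, hv⟩
    have key : ∀ u : G.V, G.Reaches u s →
        ∀ hu : u ∈ H, (G.restrict H hher).Reaches ⟨u, hu⟩ ⟨s, hs⟩ := by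
      intro u hu
      refine Relation.ReflTransGen.head_induction_on hu ?_ ?_
      · intro _; exact Relation.ReflTransGen.refl
      · rintro x c ⟨e, hesrc, hern⟩ _ ih hx
        have hxH : G.src e ∈ H := by rw [hesrc]; exact hx
        have hcH : c ∈ H := hern ▸ hher e hxH
        have hstep : (G.restrict H hher).Step ⟨x, hx⟩ ⟨c, hcH⟩ :=
          ⟨⟨e, hxH⟩, Subtype.ext hesrc, Subtype.ext hern⟩
        exact Relation.ReflTransGen.head hstep (ih hcH)
    exact key v (hreach v) hv
  have huniqH : ∀ v : (G.restrict H hher).V,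
      (G.restrict H hher).IsSink v → v = ⟨s, hs⟩ := by
    intro v hv
    have hGs : G.IsSink v.1 := by
      intro e he
      exact hv ⟨e, he ▸ v.2⟩ (Subtype.ext he)
    exact Subtype.ext (huniq v.1 hGs)
  have hsandH : (G.restrict H hher).IsSandpile ⟨s, hs⟩ := ⟨hsinkH, huniqH, hreachH⟩
  have hfin : Finite ((G.restrict H hher).SP ⟨s, hs⟩) :=
    SPAux.finite_SP (G.restrict H hher) ⟨s, hs⟩ hsandH
  set z := T.sum id with hz
  -- z is idempotent
  have hzz : z + z = z := by
    rw [hz, ← Finset.sum_add_distrib]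
    exact Finset.sum_congr rfl (fun t ht => (hT t).1 ht)
  -- z is recurrent
  have hrecz : Recurrent z := by
    intro c
    obtain ⟨k, hk, hidem⟩ := SPAux.exists_idem_nsmul c
    have hkT : k • c ∈ T := (hT _).2 hidem
    have hzdec : z = k • c + (T.erase (k • c)).sum id :=
      (Finset.add_sum_erase T id hkT).symm
    refine ⟨(k - 1) • c + (T.erase (k • c)).sum id, ?_⟩
    rw [hzdec, ← add_assoc]
    congr 1
    have hks : k - 1 + 1 = k := by omega
    conv_lhs => rw [← hks, succ_nsmul']
  -- recurrent absorbs
  have hadd : ∀ a b : (G.restrict H hher).SP ⟨s, hs⟩, Recurrent a → Recurrent (a + b) := by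
    intro a b ha c
    obtain ⟨x, hx⟩ := ha c
    exact ⟨x + b, by rw [hx, add_assoc]⟩
  have hconj4 : ∀ a : (G.restrict H hher).SP ⟨s, hs⟩, Recurrent a → z + a = a := by
    intro a ha
    obtain ⟨x, hx⟩ := ha z
    rw [hx, ← add_assoc, hzz]
  have hconj5 : ∀ a : (G.restrict H hher).SP ⟨s, hs⟩, Recurrent a →
      ∃ b, Recurrent b ∧ a + b = z := by
    intro a ha
    obtain ⟨k, hk, hidem⟩ := SPAux.exists_idem_nsmul a
    have hkT : k • a ∈ T := (hT _).2 hidem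
    have hzdec : z = k • a + (T.erase (k • a)).sum id :=
      (Finset.add_sum_erase T id hkT).symm
    set r := (T.erase (k • a)).sum id with hrdef
    refine ⟨z + ((k - 1) • a + r), hadd z _ hrecz, ?_⟩
    have haw : a + ((k - 1) • a + r) = z := by
      rw [← add_assoc]
      have hks : k = (k - 1) + 1 := by omega
      have h1 : a + (k - 1) • a = k • a := by
        conv_rhs => rw [hks]
        rw [succ_nsmul']
      rw [h1, hzdec]
    calc a + (z + ((k - 1) • a + r)) = z + (a + ((k - 1) • a + r)) := by
          rw [← add_assoc, add_comm a z, add_assoc]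
      _ = z + z := by rw [haw]
      _ = z := hzz
  refine ⟨?_, fun a b ha _ => hadd a b ha, hrecz, hconj4, hconj5, ?_⟩
  · ext y
    simp only [Set.mem_setOf_eq]
    constructor
    · rintro ⟨a, rfl⟩
      exact hadd z a hrecz
    · intro hy
      obtain ⟨x, hx⟩ := hy z
      exact ⟨x, hx⟩
  -- the maximal subgroup statement
  obtain ⟨ζ₀, hζ₀⟩ := SPAux.spMk_surjective (G.restrict H hher) ⟨s, hs⟩ z
  set ζ : Multiset {v : G.V // v ∈ H} := ζ₀ with hζdef
  have hζ : (G.restrict H hher).spMk ⟨s, hs⟩ ζ = z := hζ₀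
  set Φ : Multiset {v : G.V // v ∈ H} → G.SP s :=
    fun a => G.spMk s (a.map Subtype.val) with hΦ
  set S : Set (G.SP s) := {x : G.SP s | ∃ a : Multiset {v : G.V // v ∈ H},
    Recurrent ((G.restrict H hher).spMk ⟨s, hs⟩ a) ∧ x = G.spMk s (a.map Subtype.val)}
    with hS
  have hΦadd : ∀ a b, Φ (a + b) = Φ a + Φ b := by
    intro a b
    rw [hΦ]
    simp only [Multiset.map_add]
    exact SPAux.spMk_add G s _ _
  have hK1 : ∀ a b, Φ a = Φ b ↔
      (G.restrict H hher).spMk ⟨s, hs⟩ a = (G.restrict H hher).spMk ⟨s, hs⟩ b :=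
    fun a b => SPAux.spMk_map_eq_iff G s H hher hs hsink a b
  set ebar := Φ ζ with hebar
  have hebarS : ebar ∈ S := ⟨ζ, hζ ▸ hrecz, rfl⟩
  have hebar_idem : ebar + ebar = ebar := by
    rw [hebar, ← hΦadd]
    rw [hK1]
    have : (G.restrict H hher).spMk ⟨s, hs⟩ (ζ + ζ)
        = (G.restrict H hher).spMk ⟨s, hs⟩ ζ + (G.restrict H hher).spMk ⟨s, hs⟩ ζ :=
      map_add _ _ _
    rw [this, hζ, hzz]
  -- key identity lemmas for members of S
  have hSid : ∀ x ∈ S, ebar + x = x := by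
    rintro x ⟨a, ha, rfl⟩
    rw [hebar, ← hΦadd, hK1]
    have : (G.restrict H hher).spMk ⟨s, hs⟩ (ζ + a)
        = z + (G.restrict H hher).spMk ⟨s, hs⟩ a := by
      rw [← hζ]; exact map_add _ _ _
    rw [this, hconj4 _ ha]
  have hSinv : ∀ x ∈ S, ∃ y ∈ S, x + y = ebar := by
    rintro x ⟨a, ha, rfl⟩
    obtain ⟨B, hBrec, hBz⟩ := hconj5 _ ha
    obtain ⟨b₀, hb₀⟩ := SPAux.spMk_surjective (G.restrict H hher) ⟨s, hs⟩ B
    set b : Multiset {v : G.V // v ∈ H} := b₀ with hbdef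
    have hb : (G.restrict H hher).spMk ⟨s, hs⟩ b = B := hb₀
    refine ⟨Φ b, ⟨b, hb ▸ hBrec, rfl⟩, ?_⟩
    show Φ a + Φ b = ebar
    rw [← hΦadd, hebar, hK1]
    have : (G.restrict H hher).spMk ⟨s, hs⟩ (a + b)
        = (G.restrict H hher).spMk ⟨s, hs⟩ a + B := by
      rw [← hb]; exact map_add _ _ _
    rw [this, hBz, hζ]
  have hSclosed : ∀ x ∈ S, ∀ y ∈ S, x + y ∈ S := by
    rintro x ⟨a, ha, rfl⟩ y ⟨b, hb, rfl⟩
    refine ⟨a + b, ?_, ?_⟩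
    · have : (G.restrict H hher).spMk ⟨s, hs⟩ (a + b)
          = (G.restrict H hher).spMk ⟨s, hs⟩ a + (G.restrict H hher).spMk ⟨s, hs⟩ b :=
        map_add _ _ _
      rw [this]
      exact hadd _ _ ha
    · show Φ a + Φ b = Φ (a + b)
      rw [hΦadd]
  have hSgroup : IsSubgroupSet S :=
    ⟨⟨ebar, hebarS⟩, hSclosed, ebar, hebarS, hSid, hSinv⟩
  refine ⟨hSgroup, ?_⟩
  -- maximality
  intro T₀ hT₀ hST₀
  obtain ⟨hne', hclosed', e', he'T, hid', hinv'⟩ := hT₀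
  have hebarT : ebar ∈ T₀ := hST₀ hebarS
  have h1 : e' + ebar = ebar := hid' ebar hebarT
  obtain ⟨y', hy'T, hy'⟩ := hinv' ebar hebarT
  have he'eq : e' = ebar := by
    calc e' = ebar + y' := hy'.symm
      _ = (ebar + ebar) + y' := by rw [hebar_idem]
      _ = ebar + (ebar + y') := add_assoc _ _ _
      _ = ebar + e' := by rw [hy']
      _ = e' + ebar := add_comm _ _
      _ = ebar := h1
  refine Set.Subset.antisymm hST₀ ?_
  intro x hxT
  obtain ⟨y, hyT, hxy⟩ := hinv' x hxT
  have hidx : ebar + x = x := by rw [← he'eq]; exact hid' x hxT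
  have hxyebar : x + y = ebar := by rw [hxy, he'eq]
  obtain ⟨m, hm⟩ := SPAux.spMk_surjective G s x
  obtain ⟨m', hm'⟩ := SPAux.spMk_surjective G s y
  have hmm : G.spMk s (m + m') = G.spMk s (ζ.map Subtype.val) := by
    rw [SPAux.spMk_add, hm, hm']
    exact hxyebar
  obtain ⟨c, hc1, hc2⟩ := (SPAux.spMk_eq_iff G s hsink).1 hmm
  have hζH : ∀ u ∈ ζ.map (Subtype.val : {v : G.V // v ∈ H} → G.V), u ∈ H := by
    intro u hu
    obtain ⟨w, _, rfl⟩ := Multiset.mem_map.1 hu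
    exact w.2
  have hcH : ∀ u ∈ c, u ∈ H := SPAux.rt_subH G s H hher hc2 hζH
  have hmH : ∀ u ∈ m, u ∈ H := by
    by_contra hcon
    push_neg at hcon
    obtain ⟨u, hu1, hu2⟩ := hcon
    have : ∃ u ∈ m + m', u ∉ H := ⟨u, Multiset.mem_add.2 (Or.inl hu1), hu2⟩
    obtain ⟨w, hw1, hw2⟩ := SPAux.rt_notsubH G s H hsat hs hc1 this
    exact hw2 (hcH w hw1)
  have hm'H : ∀ u ∈ m', u ∈ H := by
    by_contra hcon
    push_neg at hcon
    obtain ⟨u, hu1, hu2⟩ := hcon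
    have : ∃ u ∈ m + m', u ∉ H := ⟨u, Multiset.mem_add.2 (Or.inr hu1), hu2⟩
    obtain ⟨w, hw1, hw2⟩ := SPAux.rt_notsubH G s H hsat hs hc1 this
    exact hw2 (hcH w hw1)
  obtain ⟨ma, hma⟩ := SPAux.exists_lift (· ∈ H) m hmH
  obtain ⟨mb, hmb⟩ := SPAux.exists_lift (· ∈ H) m' hm'H
  have hxa : x = Φ ma := by
    show x = G.spMk s (ma.map Subtype.val)
    rw [hma]; exact hm.symm
  have hyb : y = Φ mb := by
    show y = G.spMk s (mb.map Subtype.val)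
    rw [hmb]; exact hm'.symm
  -- spMk_H (ζ + ma) = spMk_H ma
  have hzA : z + (G.restrict H hher).spMk ⟨s, hs⟩ ma
      = (G.restrict H hher).spMk ⟨s, hs⟩ ma := by
    have hΦid : Φ (ζ + ma) = Φ ma := by
      rw [hΦadd, ← hxa, ← hebar]
      exact hidx
    have h2 := (hK1 (ζ + ma) ma).1 hΦid
    calc z + (G.restrict H hher).spMk ⟨s, hs⟩ ma
        = (G.restrict H hher).spMk ⟨s, hs⟩ ζ + (G.restrict H hher).spMk ⟨s, hs⟩ ma := by
          rw [hζ]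
      _ = (G.restrict H hher).spMk ⟨s, hs⟩ (ζ + ma) :=
          (SPAux.spMk_add (G.restrict H hher) ⟨s, hs⟩ ζ ma).symm
      _ = (G.restrict H hher).spMk ⟨s, hs⟩ ma := h2
  have hArec : Recurrent ((G.restrict H hher).spMk ⟨s, hs⟩ ma) := by
    intro c
    obtain ⟨w, hw⟩ := hrecz c
    refine ⟨w + (G.restrict H hher).spMk ⟨s, hs⟩ ma, ?_⟩
    conv_lhs => rw [← hzA, hw]
    rw [add_assoc]
  exact ⟨ma, hArec, hxa⟩
end

section
/- Let E be a sandpile graph. The set R of recurrent elements of SP(E) equals ⋂_{c ∈ SP(E)} (c + SP(E)); R is closed under addition and forms an abelian group under the induced addition; and R is isomorphic as a group to the Grothendieck group of SP(E), i.e. to the sandpile group G(E). -/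
section SandAux

variable {M : Type} [AddCommMonoid M]

lemma rec_add {a : M} (ha : Recurrent a) (b : M) : Recurrent (a + b) := fun c => by
  obtain ⟨z, hz⟩ := ha c
  exact ⟨z + b, by rw [hz, add_assoc]⟩

lemma rec_add_left {a : M} (ha : Recurrent a) (b : M) : Recurrent (b + a) := by
  rw [add_comm]; exact rec_add ha b

lemma rec_key {a b : M} (ha : Recurrent a) (hb : Recurrent b) :
    ∃ z, Recurrent z ∧ b = a + z := by
  obtain ⟨m, hm⟩ := hb (a + a)
  exact ⟨a + m, rec_add ha m, by rw [hm, add_assoc]⟩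

lemma rec_cancel {e x y z : M} (he_rec : Recurrent e)
    (he_id : ∀ b : M, Recurrent b → e + b = b)
    (hx : Recurrent x) (hy : Recurrent y) (hz : Recurrent z)
    (h : x + z = y + z) : x = y := by
  obtain ⟨w, hw, hzw⟩ := rec_key hz he_rec
  calc x = e + x := (he_id x hx).symm
    _ = (x + z) + w := by rw [hzw]; abel
    _ = (y + z) + w := by rw [h]
    _ = e + y := by rw [hzw]; abel
    _ = y := he_id y hy

lemma rec_inv_unique {e x u u' : M} (he_id : ∀ b : M, Recurrent b → e + b = b)
    (hu : Recurrent u) (hu' : Recurrent u')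
    (h : x + u = e) (h' : x + u' = e) : u = u' := by
  calc u = e + u := (he_id u hu).symm
    _ = u' + (x + u) := by rw [← h']; abel
    _ = e + u' := by rw [h]; abel
    _ = u' := he_id u' hu'

theorem recurrent_main (a₀ : M) (ha₀ : Recurrent a₀) :
    (∃ e : M, Recurrent e ∧ (∀ a : M, Recurrent a → e + a = a) ∧
        ∀ a : M, Recurrent a → ∃ b, Recurrent b ∧ a + b = e) ∧
    (∃ f : GrGroup M → M, Function.Injective f ∧
        Set.range f = {a : M | Recurrent a} ∧
        ∀ p q : GrGroup M, f (p + q) = f p + f q) := by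
  obtain ⟨e, he_rec, hee⟩ := rec_key ha₀ ha₀
  have he_id : ∀ b : M, Recurrent b → e + b = b := by
    intro b hb
    obtain ⟨z, hz⟩ := hb a₀
    calc e + b = (a₀ + e) + z := by rw [hz]; abel
      _ = a₀ + z := by rw [← hee]
      _ = b := hz.symm
  have hinv_ex : ∀ m : M, ∃ y, Recurrent y ∧ (e + m) + y = e := by
    intro m
    obtain ⟨y, hy, hey⟩ := rec_key (rec_add he_rec m) he_rec
    exact ⟨y, hy, hey.symm⟩
  set inv : M → M := fun m => Classical.choose (hinv_ex m) with hinvdef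
  have hinv_rec : ∀ m : M, Recurrent (inv m) := fun m => (Classical.choose_spec (hinv_ex m)).1
  have hinv : ∀ m : M, (e + m) + inv m = e := fun m => (Classical.choose_spec (hinv_ex m)).2
  have hrecg : ∀ m : M, Recurrent (e + m) := fun m => rec_add he_rec m
  have hEE : e + e = e := he_id e he_rec
  have hf_rec : ∀ p : M × M, Recurrent ((e + p.1) + inv p.2) := fun p =>
    rec_add_left (hinv_rec p.2) _
  have hinv_add : ∀ m n : M, inv (m + n) = inv m + inv n := by
    intro m n
    have hsum_rec : Recurrent (inv m + inv n) := rec_add (hinv_rec m) _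
    have hkey : (e + (m + n)) + (inv m + inv n) = e := by
      have hrec' : Recurrent ((e + (m + n)) + (inv m + inv n)) := rec_add_left hsum_rec _
      calc (e + (m + n)) + (inv m + inv n)
          = e + ((e + (m + n)) + (inv m + inv n)) := (he_id _ hrec').symm
        _ = ((e + m) + inv m) + ((e + n) + inv n) := by abel
        _ = e + e := by rw [hinv m, hinv n]
        _ = e := hEE
    exact rec_inv_unique he_id (hinv_rec _) hsum_rec (hinv (m + n)) hkey
  refine ⟨⟨e, he_rec, he_id, fun a ha => ?_⟩, ?_⟩
  · obtain ⟨y, hy, hey⟩ := rec_key ha he_rec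
    exact ⟨y, hy, hey.symm⟩
  · have resp : ∀ p q : M × M, (grSetoid M).r p q →
        (e + p.1) + inv p.2 = (e + q.1) + inv q.2 := by
      intro p q ⟨z, hz⟩
      apply rec_cancel he_rec he_id (hf_rec p) (hf_rec q)
        (rec_add (hrecg p.2) (e + q.2))
      calc ((e + p.1) + inv p.2) + ((e + p.2) + (e + q.2))
          = ((e + p.2) + inv p.2) + ((e + p.1) + (e + q.2)) := by abel
        _ = e + ((e + p.1) + (e + q.2)) := by rw [hinv p.2]
        _ = ((e + z) + inv z) + ((e + p.1) + (e + q.2)) := by rw [hinv z]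
        _ = ((e + (p.1 + q.2 + z)) + (e + e)) + inv z := by abel
        _ = ((e + (p.2 + q.1 + z)) + (e + e)) + inv z := by rw [hz]
        _ = ((e + z) + inv z) + ((e + q.1) + (e + p.2)) := by abel
        _ = e + ((e + q.1) + (e + p.2)) := by rw [hinv z]
        _ = ((e + q.2) + inv q.2) + ((e + q.1) + (e + p.2)) := by rw [hinv q.2]
        _ = ((e + q.1) + inv q.2) + ((e + p.2) + (e + q.2)) := by abel
    refine ⟨Quotient.lift (fun p : M × M => (e + p.1) + inv p.2) resp, ?_, ?_, ?_⟩
    · intro p q h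
      induction p using Quotient.ind
      induction q using Quotient.ind
      rename_i p q
      apply Quotient.sound
      have h' : (e + p.1) + inv p.2 = (e + q.1) + inv q.2 := h
      have h2 : ((e + p.1) + inv p.2) + ((e + p.2) + (e + q.2))
          = ((e + q.1) + inv q.2) + ((e + p.2) + (e + q.2)) := by rw [h']
      have h3 : e + ((e + p.1) + (e + q.2)) = e + ((e + q.1) + (e + p.2)) := by
        calc e + ((e + p.1) + (e + q.2))
            = ((e + p.2) + inv p.2) + ((e + p.1) + (e + q.2)) := by rw [hinv p.2]
          _ = ((e + p.1) + inv p.2) + ((e + p.2) + (e + q.2)) := by abel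
          _ = ((e + q.1) + inv q.2) + ((e + p.2) + (e + q.2)) := h2
          _ = ((e + q.2) + inv q.2) + ((e + q.1) + (e + p.2)) := by abel
          _ = e + ((e + q.1) + (e + p.2)) := by rw [hinv q.2]
      refine ⟨e + e + e, ?_⟩
      calc p.1 + q.2 + (e + e + e) = e + ((e + p.1) + (e + q.2)) := by abel
        _ = e + ((e + q.1) + (e + p.2)) := h3
        _ = p.2 + q.1 + (e + e + e) := by abel
    · apply Set.eq_of_subset_of_subset
      · rintro x ⟨p, rfl⟩
        induction p using Quotient.ind
        rename_i p
        exact hf_rec p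
      · intro a ha
        refine ⟨Quotient.mk (grSetoid M) (a, 0), ?_⟩
        have h0 : e + inv 0 = e := by
          have := hinv 0
          rwa [add_zero] at this
        show (e + a) + inv 0 = a
        calc (e + a) + inv 0 = a + (e + inv 0) := by abel
          _ = a + e := by rw [h0]
          _ = e + a := by abel
          _ = a := he_id a ha
    · intro p q
      induction p using Quotient.ind
      induction q using Quotient.ind
      rename_i p q
      show (e + (p.1 + q.1)) + inv (p.2 + q.2)
          = ((e + p.1) + inv p.2) + ((e + q.1) + inv q.2)
      rw [hinv_add]
      have hrec' : Recurrent ((e + (p.1 + q.1)) + (inv p.2 + inv q.2)) :=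
        rec_add_left (rec_add (hinv_rec p.2) _) _
      calc (e + (p.1 + q.1)) + (inv p.2 + inv q.2)
          = e + ((e + (p.1 + q.1)) + (inv p.2 + inv q.2)) := (he_id _ hrec').symm
        _ = ((e + p.1) + inv p.2) + ((e + q.1) + inv q.2) := by abel

end SandAux

namespace DGraph

variable (G : DGraph) (s : G.V)

/-- The toppling-only step relation. -/
def tstep (a b : Multiset G.V) : Prop :=
  ∃ v : G.V, ¬ G.IsSink v ∧ (G.outEdges v).card ≤ a.count v ∧
    b = (a - Multiset.replicate (G.outEdges v).card v) + (G.outEdges v).val.map G.rng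

/-- The chip inflow into `u` given toppling counts `t`. -/
def inflow (t : G.V → ℕ) (u : G.V) : ℕ :=
  ∑ e ∈ Finset.univ.filter (fun e => G.rng e = u), t (G.src e)

lemma con_singleton : (G.spCon s) {s} 0 :=
  AddConGen.Rel.of _ _ (Or.inl ⟨rfl, rfl⟩)

lemma con_replicate (k : ℕ) : (G.spCon s) (Multiset.replicate k s) 0 := by
  induction k with
  | zero => exact (G.spCon s).refl 0
  | succ k ih =>
    have h := (G.spCon s).add (G.con_singleton s) ih
    rw [add_zero] at h
    rw [Multiset.replicate_succ, ← Multiset.singleton_add]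
    exact h

lemma filter_eq_part (c : Multiset G.V) :
    c.filter (fun v => ¬ v ≠ s) = Multiset.replicate (c.count s) s := by
  rw [← Multiset.filter_eq]
  exact Multiset.filter_congr (fun x _ => by simp [eq_comm])

lemma con_of_step1 {a b : Multiset G.V} (h : G.step1 s a b) : (G.spCon s) a b := by
  rcases h with ⟨hs, rfl⟩ | ⟨v, hv, hle, rfl⟩
  · have h1 := (G.spCon s).add ((G.spCon s).refl (a.filter (fun v => v ≠ s)))
      (G.con_replicate s (a.count s))
    rw [add_zero] at h1
    have h2 : a.filter (fun v => v ≠ s) + Multiset.replicate (a.count s) s = a := by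
      rw [← G.filter_eq_part s a]
      exact Multiset.filter_add_not _ a
    have h3 := h1
    rw [h2] at h3
    exact h3
  · have hle' : Multiset.replicate (G.outEdges v).card v ≤ a :=
      Multiset.le_count_iff_replicate_le.mp hle
    have h1 := (G.spCon s).add
      ((G.spCon s).refl (a - Multiset.replicate (G.outEdges v).card v))
      (AddConGen.Rel.of _ _ (Or.inr ⟨v, hv, rfl, rfl⟩) :
        (G.spCon s) (Multiset.replicate (G.outEdges v).card v) ((G.outEdges v).val.map G.rng))
    rwa [tsub_add_cancel_of_le hle'] at h1

lemma spMk_eq_of_transforms {a b : Multiset G.V} (h : G.Transforms s a b) :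
    G.spMk s a = G.spMk s b := by
  induction h with
  | refl => rfl
  | tail _ hstep ih =>
    exact ih.trans ((G.spCon s).eq.mpr (G.con_of_step1 s hstep))

lemma inflow_single (v u : G.V) :
    G.inflow (fun w => if w = v then 1 else 0) u
      = Multiset.count u ((G.outEdges v).val.map G.rng) := by
  rw [Multiset.count_map, inflow]
  have h1 : ∑ e ∈ Finset.univ.filter (fun e => G.rng e = u),
      (if G.src e = v then 1 else 0)
      = ((Finset.univ.filter (fun e => G.rng e = u)).filter (fun e => G.src e = v)).card := by
    rw [Finset.card_filter]
  have h2 : ((Finset.univ.filter (fun e => G.rng e = u)).filter (fun e => G.src e = v))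
      = (G.outEdges v).filter (fun e => u = G.rng e) := by
    ext e
    simp only [Finset.mem_filter, Finset.mem_univ, true_and, outEdges]
    constructor
    · rintro ⟨h1, h2⟩; exact ⟨h2, h1.symm⟩
    · rintro ⟨h1, h2⟩; exact ⟨h2.symm, h1⟩
  have h3 : ((G.outEdges v).filter (fun e => u = G.rng e)).card
      = (Multiset.filter (fun e => u = G.rng e) (G.outEdges v).val).card := by
    rfl
  rw [h1, h2, h3]

lemma tstep_flow {a b : Multiset G.V} (h : G.tstep a b) :
    ∃ t : G.V → ℕ, (∀ v, G.IsSink v → t v = 0) ∧ (∃ v, t v ≠ 0) ∧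
      ∀ u, Multiset.count u b + t u * (G.outEdges u).card
          = Multiset.count u a + G.inflow t u := by
  obtain ⟨v, hv, hle, rfl⟩ := h
  refine ⟨fun w => if w = v then 1 else 0, fun w hw => if_neg (fun h => hv (by rw [← h]; exact hw)),
    ⟨v, by simp⟩, fun u => ?_⟩
  simp only []
  rw [G.inflow_single v u, Multiset.count_add, Multiset.count_sub, Multiset.count_replicate]
  by_cases h : u = v
  · subst h
    rw [if_pos rfl, if_pos rfl, one_mul]
    omega
  · have h' : ¬ v = u := fun e => h e.symm
    simp [h, h']

lemma inflow_add (t₁ t₂ : G.V → ℕ) (u : G.V) :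
    G.inflow (fun w => t₁ w + t₂ w) u = G.inflow t₁ u + G.inflow t₂ u := by
  simp [inflow, Finset.sum_add_distrib]

lemma chain_flow {a b : Multiset G.V} (h : Relation.TransGen G.tstep a b) :
    ∃ t : G.V → ℕ, (∀ v, G.IsSink v → t v = 0) ∧ (∃ v, t v ≠ 0) ∧
      ∀ u, Multiset.count u b + t u * (G.outEdges u).card
          = Multiset.count u a + G.inflow t u := by
  induction h with
  | single h => exact G.tstep_flow h
  | tail _ hstep ih =>
    obtain ⟨t₁, hs₁, ⟨v₁, hv₁⟩, hb₁⟩ := ih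
    obtain ⟨t₂, hs₂, _, hb₂⟩ := G.tstep_flow hstep
    refine ⟨fun w => t₁ w + t₂ w, fun w hw => by simp [hs₁ w hw, hs₂ w hw],
      ⟨v₁, ?_⟩, fun u => ?_⟩
    · show t₁ v₁ + t₂ v₁ ≠ 0
      omega
    · show Multiset.count u _ + (t₁ u + t₂ u) * (G.outEdges u).card
        = Multiset.count u a + G.inflow (fun w => t₁ w + t₂ w) u
      rw [G.inflow_add t₁ t₂ u, add_mul]
      have h1 := hb₁ u
      have h2 := hb₂ u
      omega

lemma no_cycle (hG : G.IsSandpile s) (a : Multiset G.V) :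
    ¬ Relation.TransGen G.tstep a a := by
  intro h
  obtain ⟨t, hsink, ⟨v₀, hv₀⟩, hbal⟩ := G.chain_flow h
  have hbal' : ∀ u, t u * (G.outEdges u).card = G.inflow t u := by
    intro u; have := hbal u; omega
  have hstep : ∀ u w, G.Step u w → t u ≠ 0 → t w ≠ 0 := by
    rintro u w ⟨e, he1, he2⟩ htu htw
    have h1 : t u ≤ G.inflow t w := by
      have he : e ∈ Finset.univ.filter (fun e => G.rng e = w) := by
        simp [he2]
      calc t u = t (G.src e) := by rw [he1]
        _ ≤ _ := Finset.single_le_sum (f := fun e => t (G.src e))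
              (fun _ _ => Nat.zero_le _) he
    have h2 := hbal' w
    rw [htw, zero_mul] at h2
    omega
  have hreach : ∀ u w, G.Reaches u w → t u ≠ 0 → t w ≠ 0 := by
    intro u w h
    induction h with
    | refl => exact id
    | tail _ hst ih => exact fun hu => hstep _ _ hst (ih hu)
  exact hreach v₀ s (hG.2.2 v₀) hv₀ (hsink s hG.1)

lemma tstep_card {a b : Multiset G.V} (h : G.tstep a b) :
    Multiset.card b = Multiset.card a := by
  obtain ⟨v, hv, hle, rfl⟩ := h
  have hle' : Multiset.replicate (G.outEdges v).card v ≤ a :=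
    Multiset.le_count_iff_replicate_le.mp hle
  have hca : (G.outEdges v).card ≤ Multiset.card a :=
    le_trans hle (Multiset.count_le_card _ _)
  rw [Multiset.card_add, Multiset.card_map, Multiset.card_sub hle', Multiset.card_replicate]
  have : Multiset.card (G.outEdges v).val = (G.outEdges v).card := rfl
  omega

lemma wf_tstep (hG : G.IsSandpile s) (n : ℕ) :
    WellFounded (fun x y : {m : Multiset G.V // Multiset.card m = n} => G.tstep y.1 x.1) := by
  haveI : Finite {m : Multiset G.V // Multiset.card m = n} := by
    apply Finite.of_injective (fun x : {m : Multiset G.V // Multiset.card m = n} =>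
      (fun v => (⟨Multiset.count v x.1, by
        have := Multiset.count_le_card v x.1
        omega⟩ : Fin (n + 1)) : G.V → Fin (n + 1)))
    intro x y hxy
    apply Subtype.ext
    apply Multiset.ext.mpr
    intro v
    have := congrFun hxy v
    exact congrArg Fin.val this
  set R := fun x y : {m : Multiset G.V // Multiset.card m = n} => G.tstep y.1 x.1 with hR
  have hlift : ∀ {x y}, Relation.TransGen R x y → Relation.TransGen G.tstep y.1 x.1 := by
    intro x y h
    induction h with
    | single h => exact Relation.TransGen.single h
    | tail _ hbc ih => exact Relation.TransGen.head hbc ih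
  haveI : IsTrans _ (Relation.TransGen R) := inferInstance
  haveI : IsIrrefl _ (Relation.TransGen R) :=
    ⟨fun x hx => G.no_cycle s hG x.1 (hlift hx)⟩
  exact Subrelation.wf (fun h => Relation.TransGen.single h)
    (Finite.wellFounded_of_trans_of_irrefl _)

lemma stab (hG : G.IsSandpile s) (a : Multiset G.V) :
    ∃ b, G.Transforms s a b ∧ Multiset.count s b = 0 ∧
      ∀ v, ¬ G.IsSink v → Multiset.count v b < (G.outEdges v).card := by
  have hremove : ∀ c : Multiset G.V, G.Transforms s c (c.filter (fun v => v ≠ s)) ∧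
      Multiset.count s (c.filter (fun v => v ≠ s)) = 0 ∧
      Multiset.card c = Multiset.card (c.filter (fun v => v ≠ s)) + Multiset.count s c := by
    intro c
    refine ⟨?_, ?_, ?_⟩
    · by_cases hs : s ∈ c
      · exact Relation.ReflTransGen.single (Or.inl ⟨hs, rfl⟩)
      · have h : c.filter (fun v => v ≠ s) = c :=
          Multiset.filter_eq_self.mpr (fun x hx h => hs (h ▸ hx))
        rw [h]
        exact Relation.ReflTransGen.refl
    · rw [Multiset.count_eq_zero]
      intro hmem
      exact (Multiset.mem_filter.mp hmem).2 rfl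
    · conv_lhs => rw [← Multiset.filter_add_not (fun v => v ≠ s) c]
      rw [Multiset.card_add, G.filter_eq_part s c, Multiset.card_replicate]
  suffices H : ∀ n, ∀ a : Multiset G.V, Multiset.card a = n →
      ∃ b, G.Transforms s a b ∧ Multiset.count s b = 0 ∧
        ∀ v, ¬ G.IsSink v → Multiset.count v b < (G.outEdges v).card by
    exact H _ a rfl
  intro n
  induction n using Nat.strong_induction_on with
  | _ n ih =>
  intro a hcard
  obtain ⟨ht1, hc1, hcd1⟩ := hremove a
  by_cases hlt : Multiset.card (a.filter (fun v => v ≠ s)) < n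
  · obtain ⟨b, hb1, hb2, hb3⟩ := ih _ hlt _ rfl
    exact ⟨b, ht1.trans hb1, hb2, hb3⟩
  · have hcard1 : Multiset.card (a.filter (fun v => v ≠ s)) = n := by omega
    have inner : ∀ x : {m : Multiset G.V // Multiset.card m = n}, Multiset.count s x.1 = 0 →
        ∃ b, G.Transforms s x.1 b ∧ Multiset.count s b = 0 ∧
          ∀ v, ¬ G.IsSink v → Multiset.count v b < (G.outEdges v).card := by
      intro x
      induction x using (G.wf_tstep s hG n).induction with
      | _ x ihx =>
      intro hxs
      by_cases hstab : ∀ v, ¬ G.IsSink v → Multiset.count v x.1 < (G.outEdges v).card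
      · exact ⟨x.1, Relation.ReflTransGen.refl, hxs, hstab⟩
      · push_neg at hstab
        obtain ⟨v, hv, hvc⟩ := hstab
        have hts : G.tstep x.1 ((x.1 - Multiset.replicate (G.outEdges v).card v) +
            (G.outEdges v).val.map G.rng) := ⟨v, hv, hvc, rfl⟩
        have hstep : G.step1 s x.1 ((x.1 - Multiset.replicate (G.outEdges v).card v) +
            (G.outEdges v).val.map G.rng) := Or.inr ⟨v, hv, hvc, rfl⟩
        set b := (x.1 - Multiset.replicate (G.outEdges v).card v) +
            (G.outEdges v).val.map G.rng with hbdef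
        have hcardb : Multiset.card b = n := by rw [G.tstep_card hts, x.2]
        by_cases hbs : Multiset.count s b = 0
        · obtain ⟨c, hc1', hc2, hc3⟩ := ihx ⟨b, hcardb⟩ hts hbs
          exact ⟨c, Relation.ReflTransGen.head hstep hc1', hc2, hc3⟩
        · obtain ⟨htb, hcb, hcdb⟩ := hremove b
          have hlt' : Multiset.card (b.filter (fun v => v ≠ s)) < n := by omega
          obtain ⟨c, hc1', hc2, hc3⟩ := ih _ hlt' _ rfl
          exact ⟨c, Relation.ReflTransGen.head hstep (htb.trans hc1'), hc2, hc3⟩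
    obtain ⟨b, hb1, hb2, hb3⟩ := inner ⟨a.filter (fun v => v ≠ s), hcard1⟩ hc1
    exact ⟨b, ht1.trans hb1, hb2, hb3⟩

lemma sp_finite (hG : G.IsSandpile s) : Finite (G.SP s) := by
  have hstabfin : Finite {b : Multiset G.V // Multiset.count s b = 0 ∧
      ∀ v, ¬ G.IsSink v → Multiset.count v b < (G.outEdges v).card} := by
    apply Finite.of_injective (fun x : {b : Multiset G.V // Multiset.count s b = 0 ∧
        ∀ v, ¬ G.IsSink v → Multiset.count v b < (G.outEdges v).card} =>
      (fun v => (⟨Multiset.count v x.1, by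
        by_cases hv : G.IsSink v
        · have hvs : v = s := hG.2.1 v hv
          rw [hvs, x.2.1]
          omega
        · have h1 := x.2.2 v hv
          have h2 : (G.outEdges v).card ≤ Fintype.card G.E := Finset.card_filter_le _ _
          omega⟩ : Fin (Fintype.card G.E + 1)) : G.V → Fin (Fintype.card G.E + 1)))
    intro x y hxy
    apply Subtype.ext
    apply Multiset.ext.mpr
    intro v
    exact congrArg Fin.val (congrFun hxy v)
  apply Finite.of_surjective (f := fun x : {b : Multiset G.V // Multiset.count s b = 0 ∧
      ∀ v, ¬ G.IsSink v → Multiset.count v b < (G.outEdges v).card} => G.spMk s x.1)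
  intro q
  obtain ⟨a, rfl⟩ := AddCon.mk'_surjective q
  obtain ⟨b, hb1, hb2, hb3⟩ := G.stab s hG a
  exact ⟨⟨b, hb2, hb3⟩, (G.spMk_eq_of_transforms s hb1).symm⟩

end DGraph


/-- The set of recurrent elements of `SP(E)` is `⋂_c (c + SP(E))`, is
closed under addition, forms an abelian group under the induced addition, and is
isomorphic as a group to the Grothendieck group of `SP(E)` (the sandpile group). -/
theorem recurrent_grothendieck (G : DGraph) (s : G.V) (hG : G.IsSandpile s) :
    ({a : G.SP s | Recurrent a} = ⋂ c : G.SP s, {y : G.SP s | ∃ z, y = c + z}) ∧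
    (∀ a b : G.SP s, Recurrent a → Recurrent b → Recurrent (a + b)) ∧
    (∃ e : G.SP s, Recurrent e ∧ (∀ a : G.SP s, Recurrent a → e + a = a) ∧
        ∀ a : G.SP s, Recurrent a → ∃ b, Recurrent b ∧ a + b = e) ∧
    (∃ f : GrGroup (G.SP s) → G.SP s, Function.Injective f ∧
        Set.range f = {a : G.SP s | Recurrent a} ∧
        ∀ p q : GrGroup (G.SP s), f (p + q) = f p + f q) := by
  classical
  haveI : Finite (G.SP s) := G.sp_finite s hG
  haveI : Fintype (G.SP s) := Fintype.ofFinite _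
  have hrec : Recurrent (∑ m ∈ Finset.univ, (m : G.SP s)) := by
    intro c
    exact ⟨∑ m ∈ Finset.univ.erase c, m,
      (Finset.add_sum_erase Finset.univ (fun m => m) (Finset.mem_univ c)).symm⟩
  obtain ⟨h3, h4⟩ := recurrent_main _ hrec
  refine ⟨?_, fun a b ha _ => rec_add ha b, h3, h4⟩
  ext a
  simp only [Set.mem_setOf_eq, Set.mem_iInter]
  exact Iff.rfl
end

section
/- Let E and F be sandpile graphs. If SP(E) and SP(F) are isomorphic as monoids, then the lattices 𝓗_E and 𝓗_F of nonempty saturated hereditary subsets are order isomorphic. -/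
namespace DGraph

variable (G : DGraph) (s : G.V)

/-- A multiset is supported in `H`. -/
def suppIn (H : Finset G.V) (a : Multiset G.V) : Prop := ∀ v ∈ a, v ∈ H

lemma suppIn_add {H : Finset G.V} {a b : Multiset G.V} :
    G.suppIn H (a + b) ↔ G.suppIn H a ∧ G.suppIn H b := by
  simp [suppIn, Multiset.mem_add, or_imp, forall_and]

lemma reaches_mem {H : Finset G.V} (hher : G.Hereditary H) {u w : G.V}
    (hu : u ∈ H) (h : G.Reaches u w) : w ∈ H := by
  induction h with
  | refl => exact hu
  | tail _ hstep ih =>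
      obtain ⟨e, he1, he2⟩ := hstep
      exact he2 ▸ hher e (he1.symm ▸ ih)

lemma sink_mem {H : Finset G.V} (hG : G.IsSandpile s) (hher : G.Hereditary H)
    (hne : H.Nonempty) : s ∈ H := by
  obtain ⟨u, hu⟩ := hne
  exact G.reaches_mem hher hu (hG.2.2 u)

lemma outEdges_card_pos {v : G.V} (hv : ¬ G.IsSink v) : 0 < (G.outEdges v).card := by
  simp only [IsSink, not_forall, not_not] at hv
  obtain ⟨e, he⟩ := hv
  exact Finset.card_pos.mpr ⟨e, by simp [outEdges, he]⟩

/-- The key invariance lemma: for `H` hereditary, saturated and containing the sink,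
being supported in `H` is invariant under the sandpile congruence. -/
lemma suppIn_iff_of_con {H : Finset G.V} (hs : s ∈ H) (hher : G.Hereditary H)
    (hsat : G.Saturated H) {a b : Multiset G.V} (hab : G.spCon s a b) :
    (G.suppIn H a ↔ G.suppIn H b) := by
  let c : AddCon (Multiset G.V) :=
    { r := fun a b => (G.suppIn H a ↔ G.suppIn H b)
      iseqv := ⟨fun _ => Iff.rfl, Iff.symm, Iff.trans⟩
      add' := fun {w x y z} h1 h2 => by
        show G.suppIn H (w + y) ↔ G.suppIn H (x + z)
        rw [G.suppIn_add, G.suppIn_add]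
        exact and_congr h1 h2 }
  have hle : G.spCon s ≤ c := by
    apply AddCon.addConGen_le.mpr
    rintro x y (⟨hx, hy⟩ | ⟨v, hv, hx, hy⟩)
    · subst hx; subst hy
      show G.suppIn H {s} ↔ G.suppIn H 0
      simp only [suppIn, Multiset.mem_singleton, Multiset.notMem_zero]
      constructor
      · intro _ u hu; exact absurd hu (by simp)
      · intro _ u hu; exact hu ▸ hs
    · subst hx; subst hy
      show G.suppIn H _ ↔ G.suppIn H _
      have hn := G.outEdges_card_pos hv
      constructor
      · intro hrep u hu
        obtain ⟨e, he, rfl⟩ := Multiset.mem_map.mp hu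
        have hvH : v ∈ H := hrep v (Multiset.mem_replicate.mpr ⟨by omega, rfl⟩)
        have hsrc : G.src e = v := (Finset.mem_filter.mp he).2
        exact hher e (hsrc.symm ▸ hvH)
      · intro hmap u hu
        rw [Multiset.eq_of_mem_replicate hu]
        apply hsat v hv
        intro e he
        exact hmap _ (Multiset.mem_map_of_mem _ (by simp [outEdges, he]))
  exact hle hab

lemma spMk_add (a b : Multiset G.V) :
    G.spMk s (a + b) = G.spMk s a + G.spMk s b := by
  simpa [spMk] using map_add ((G.spCon s).mk') a b

lemma spMk_zero : G.spMk s 0 = 0 := by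
  simpa [spMk] using map_zero ((G.spCon s).mk')

lemma spMk_eq_iff {a b : Multiset G.V} :
    G.spMk s a = G.spMk s b ↔ G.spCon s a b := by
  simp only [spMk, AddCon.coe_mk']
  exact AddCon.eq _

lemma spMk_surjective : Function.Surjective (G.spMk s) :=
  AddCon.mk'_surjective

lemma spMk_sink : G.spMk s {s} = 0 := by
  rw [← G.spMk_zero s, G.spMk_eq_iff]
  exact AddConGen.Rel.of _ _ (Or.inl ⟨rfl, rfl⟩)

lemma spMk_topple {v : G.V} (hv : ¬ G.IsSink v) :
    G.spMk s (Multiset.replicate (G.outEdges v).card v)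
      = G.spMk s ((G.outEdges v).val.map G.rng) := by
  rw [G.spMk_eq_iff]
  exact AddConGen.Rel.of _ _ (Or.inr ⟨v, hv, rfl, rfl⟩)

/-- The order ideal of `SP(E)` associated to a hereditary saturated set. -/
def toIdeal (H : Finset G.V) : Set (G.SP s) :=
  {x | ∃ a : Multiset G.V, G.suppIn H a ∧ x = G.spMk s a}

open Classical in
/-- The vertex set associated to an order ideal of `SP(E)`. -/
noncomputable def toHer (I : Set (G.SP s)) : Finset G.V :=
  Finset.univ.filter fun v => G.spMk s {v} ∈ I

lemma mem_toHer {I : Set (G.SP s)} {v : G.V} :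
    v ∈ G.toHer s I ↔ G.spMk s {v} ∈ I := by
  classical
  simp [toHer]

lemma mem_toIdeal {H : Finset G.V} (hs : s ∈ H) (hher : G.Hereditary H)
    (hsat : G.Saturated H) {a : Multiset G.V} :
    G.spMk s a ∈ G.toIdeal s H ↔ G.suppIn H a := by
  constructor
  · rintro ⟨b, hb, heq⟩
    exact (G.suppIn_iff_of_con s hs hher hsat ((G.spMk_eq_iff s).mp heq)).mpr hb
  · intro ha; exact ⟨a, ha, rfl⟩

lemma toIdeal_isOrderIdeal {H : Finset G.V} (hs : s ∈ H) (hher : G.Hereditary H)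
    (hsat : G.Saturated H) : IsOrderIdeal (G.toIdeal s H) := by
  refine ⟨⟨0, fun v hv => absurd hv (Multiset.notMem_zero v), (G.spMk_zero s).symm⟩, ?_, ?_⟩
  · rintro x ⟨a, ha, rfl⟩ y ⟨b, hb, rfl⟩
    exact ⟨a + b, (G.suppIn_add).mpr ⟨ha, hb⟩, (G.spMk_add s a b).symm⟩
  · intro x y hxy
    obtain ⟨a, rfl⟩ := G.spMk_surjective s x
    obtain ⟨b, rfl⟩ := G.spMk_surjective s y
    rw [← G.spMk_add s a b] at hxy
    have := ((G.suppIn_add (H := H) (a := a) (b := b))).mp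
      ((G.mem_toIdeal s hs hher hsat).mp hxy)
    exact ⟨(G.mem_toIdeal s hs hher hsat).mpr this.1,
      (G.mem_toIdeal s hs hher hsat).mpr this.2⟩

lemma spMk_mem_of_forall {I : Set (G.SP s)} (hI : IsOrderIdeal I) {a : Multiset G.V}
    (h : ∀ v ∈ a, G.spMk s {v} ∈ I) : G.spMk s a ∈ I := by
  induction a using Multiset.induction_on with
  | empty => rw [G.spMk_zero s]; exact hI.1
  | cons v a ih =>
      rw [← Multiset.singleton_add, G.spMk_add]
      exact hI.2.1 _ (h v (Multiset.mem_cons_self v a)) _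
        (ih fun u hu => h u (Multiset.mem_cons_of_mem hu))

lemma spMk_singleton_mem_of_mem {I : Set (G.SP s)} (hI : IsOrderIdeal I)
    {a : Multiset G.V} (ha : G.spMk s a ∈ I) {v : G.V} (hv : v ∈ a) :
    G.spMk s {v} ∈ I := by
  have : a = {v} + a.erase v := by
    rw [Multiset.singleton_add, Multiset.cons_erase hv]
  rw [this, G.spMk_add] at ha
  exact (hI.2.2 _ _ ha).1

lemma toHer_sink_mem {I : Set (G.SP s)} (hI : IsOrderIdeal I) : s ∈ G.toHer s I := by
  rw [G.mem_toHer, G.spMk_sink]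
  exact hI.1

lemma toHer_hereditary {I : Set (G.SP s)} (hI : IsOrderIdeal I) :
    G.Hereditary (G.toHer s I) := by
  intro e he
  rw [G.mem_toHer] at he ⊢
  set v := G.src e with hv
  have hns : ¬ G.IsSink v := fun h => h e rfl
  have hrep : G.spMk s (Multiset.replicate (G.outEdges v).card v) ∈ I := by
    apply G.spMk_mem_of_forall s hI
    intro u hu
    rw [Multiset.eq_of_mem_replicate hu]
    exact he
  rw [G.spMk_topple s hns] at hrep
  exact G.spMk_singleton_mem_of_mem s hI hrep
    (Multiset.mem_map_of_mem _ (by simp [outEdges, hv]))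

lemma toHer_saturated {I : Set (G.SP s)} (hI : IsOrderIdeal I) :
    G.Saturated (G.toHer s I) := by
  intro v hv hall
  rw [G.mem_toHer]
  have hmap : G.spMk s ((G.outEdges v).val.map G.rng) ∈ I := by
    apply G.spMk_mem_of_forall s hI
    intro u hu
    obtain ⟨e, he, rfl⟩ := Multiset.mem_map.mp hu
    have hsrc : G.src e = v := (Finset.mem_filter.mp he).2
    exact (G.mem_toHer s).mp (hall e hsrc)
  rw [← G.spMk_topple s hv] at hmap
  exact G.spMk_singleton_mem_of_mem s hI hmap
    (Multiset.mem_replicate.mpr ⟨(G.outEdges_card_pos hv).ne', rfl⟩)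

end DGraph

lemma isOrderIdeal_image {M N : Type} [AddCommMonoid M] [AddCommMonoid N] (φ : M ≃+ N)
    {I : Set M} (hI : IsOrderIdeal I) : IsOrderIdeal (φ '' I) := by
  obtain ⟨h0, hadd, hdown⟩ := hI
  refine ⟨⟨0, h0, map_zero φ⟩, ?_, ?_⟩
  · rintro x ⟨a, ha, rfl⟩ y ⟨b, hb, rfl⟩
    exact ⟨a + b, hadd a ha b hb, map_add φ a b⟩
  · intro x y hxy
    obtain ⟨c, hc, hce⟩ := hxy
    have h1 : φ.symm x + φ.symm y ∈ I := by
      have : φ.symm x + φ.symm y = c := by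
        rw [← map_add, ← hce, AddEquiv.symm_apply_apply]
      rwa [this]
    obtain ⟨hx, hy⟩ := hdown _ _ h1
    exact ⟨⟨φ.symm x, hx, φ.apply_symm_apply x⟩, ⟨φ.symm y, hy, φ.apply_symm_apply y⟩⟩

/-- A monoid isomorphism induces an order isomorphism on order ideals. -/
def orderIdealEquiv {M N : Type} [AddCommMonoid M] [AddCommMonoid N] (φ : M ≃+ N) :
    {I : Set M // IsOrderIdeal I} ≃o {I : Set N // IsOrderIdeal I} where
  toFun I := ⟨φ '' I.1, isOrderIdeal_image φ I.2⟩
  invFun I := ⟨φ.symm '' I.1, isOrderIdeal_image φ.symm I.2⟩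
  left_inv I := Subtype.ext (φ.toEquiv.symm_image_image I.1)
  right_inv I := Subtype.ext (φ.toEquiv.image_symm_image I.1)
  map_rel_iff' := by
    intro I J
    exact Set.image_subset_image_iff φ.injective

namespace DGraph

/-- The order isomorphism between nonempty saturated hereditary subsets and order
ideals of the sandpile monoid. -/
noncomputable def herOrderIso (G : DGraph) (s : G.V) (hG : G.IsSandpile s) :
    {H : Finset G.V // H.Nonempty ∧ G.Hereditary H ∧ G.Saturated H} ≃o
      {I : Set (G.SP s) // IsOrderIdeal I} where
  toFun H := ⟨G.toIdeal s H.1,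
    G.toIdeal_isOrderIdeal s (G.sink_mem s hG H.2.2.1 H.2.1) H.2.2.1 H.2.2.2⟩
  invFun I := ⟨G.toHer s I.1, ⟨s, G.toHer_sink_mem s I.2⟩, G.toHer_hereditary s I.2,
    G.toHer_saturated s I.2⟩
  left_inv := by
    rintro ⟨H, hne, hher, hsat⟩
    have hs := G.sink_mem s hG hher hne
    apply Subtype.ext
    ext v
    rw [G.mem_toHer, G.mem_toIdeal s hs hher hsat]
    simp [suppIn]
  right_inv := by
    rintro ⟨I, hI⟩
    apply Subtype.ext
    ext x
    constructor
    · rintro ⟨a, ha, rfl⟩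
      exact G.spMk_mem_of_forall s hI fun v hv => (G.mem_toHer s).mp (ha v hv)
    · intro hx
      obtain ⟨a, rfl⟩ := G.spMk_surjective s x
      exact ⟨a, fun v hv => (G.mem_toHer s).mpr (G.spMk_singleton_mem_of_mem s hI hx hv), rfl⟩
  map_rel_iff' := by
    rintro ⟨H, hne, hher, hsat⟩ ⟨H', hne', hher', hsat'⟩
    constructor
    · intro hsub v hv
      have h1 : G.spMk s {v} ∈ G.toIdeal s H := ⟨{v}, by simpa [suppIn] using hv, rfl⟩
      have h2 : G.spMk s {v} ∈ G.toIdeal s H' := hsub h1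
      have h3 := (G.mem_toIdeal s (G.sink_mem s hG hher' hne') hher' hsat').mp h2
      simpa [suppIn] using h3 v (by simp)
    · rintro hsub x ⟨a, ha, rfl⟩
      exact ⟨a, fun v hv => hsub (ha v hv), rfl⟩

end DGraph

/-- If two sandpile monoids are isomorphic as monoids, then the
lattices of nonempty saturated hereditary subsets are order isomorphic. -/
theorem sp_iso_hereditary_iso (G : DGraph) (s : G.V) (hG : G.IsSandpile s)
    (G' : DGraph) (s' : G'.V) (hG' : G'.IsSandpile s')
    (h : Nonempty (G.SP s ≃+ G'.SP s')) :
    Nonempty ({H : Finset G.V // H.Nonempty ∧ G.Hereditary H ∧ G.Saturated H} ≃o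
      {H : Finset G'.V // H.Nonempty ∧ G'.Hereditary H ∧ G'.Saturated H}) := by
  obtain ⟨φ⟩ := h
  exact ⟨((G.herOrderIso s hG).trans (orderIdealEquiv φ)).trans (G'.herOrderIso s' hG').symm⟩
end

section
/- Let E be a sandpile graph. The map φ_E : 𝓕_E → 𝓗_E defined by φ_E(∅) = S_E and, for a nonempty filter F, φ_E(F) = the hereditary saturated closure of ⋃_{C ∈ F} C⁰, is an order isomorphism of lattices. -/
namespace DGraph

variable (G : DGraph)

lemma reach_mem {H : Finset G.V} (hher : G.Hereditary H) {v u : G.V}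
    (h : G.Reaches v u) (hv : v ∈ H) : u ∈ H := by
  induction h with
  | refl => exact hv
  | tail _ hstep ih =>
    obtain ⟨e, he1, he2⟩ := hstep
    rw [← he2]
    exact hher e (by rwa [he1])

lemma sink_reaches_eq {v u : G.V} (hs : G.IsSink v) (h : G.Reaches v u) : u = v := by
  rcases h.cases_head with h' | ⟨w, ⟨e, he1, _⟩, _⟩
  · exact h'.symm
  · exact absurd he1 (hs e)

lemma mem_sinkSet {v : G.V} :
    v ∈ G.sinkSet ↔ ¬ ∃ u, G.Reaches v u ∧ G.OnCycle u := by
  simp [sinkSet]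

lemma onCycle_exists {v : G.V} (h : G.OnCycle v) :
    ∃ w, G.Step v w ∧ G.Reaches w v := by
  obtain ⟨w, hw, hwv⟩ := Relation.TransGen.head'_iff.mp h
  exact ⟨w, hw, hwv⟩

lemma sink_mem_sinkSet {s : G.V} (hs : G.IsSink s) : s ∈ G.sinkSet := by
  rw [mem_sinkSet]
  rintro ⟨u, hru, hcu⟩
  have h := G.sink_reaches_eq hs hru
  subst h
  obtain ⟨w, ⟨e, he1, _⟩, _⟩ := G.onCycle_exists hcu
  exact hs e he1

lemma sinkSet_hereditary : G.Hereditary G.sinkSet := by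
  intro e he
  rw [mem_sinkSet] at he ⊢
  rintro ⟨u, hru, hcu⟩
  exact he ⟨u, Relation.ReflTransGen.head ⟨e, rfl, rfl⟩ hru, hcu⟩

lemma sinkSet_saturated : G.Saturated G.sinkSet := by
  intro v hv hall
  rw [mem_sinkSet]
  rintro ⟨u, hru, hcu⟩
  rcases hru.cases_head with h' | ⟨x, ⟨e, he1, he2⟩, hxu⟩
  · subst h'
    obtain ⟨x, ⟨e, he1, he2⟩, hxw⟩ := G.onCycle_exists hcu
    have h := hall e he1
    rw [mem_sinkSet] at h
    exact h ⟨v, by rw [he2]; exact hxw, hcu⟩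
  · have h := hall e he1
    rw [mem_sinkSet] at h
    exact h ⟨u, by rw [he2]; exact hxu, hcu⟩

lemma mem_hsClosure {X : Finset G.V} {v : G.V} :
    v ∈ G.hsClosure X ↔
      ∀ H : Finset G.V, G.Hereditary H → G.Saturated H → X ⊆ H → v ∈ H := by
  simp [hsClosure]

lemma subset_hsClosure {X : Finset G.V} : X ⊆ G.hsClosure X :=
  fun _ hv => G.mem_hsClosure.mpr fun _ _ _ hX => hX hv

lemma hsClosure_min {X H : Finset G.V} (h1 : G.Hereditary H) (h2 : G.Saturated H)
    (h3 : X ⊆ H) : G.hsClosure X ⊆ H :=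
  fun _ hv => G.mem_hsClosure.mp hv H h1 h2 h3

lemma hsClosure_saturated {X : Finset G.V} : G.Saturated (G.hsClosure X) := by
  intro v hv hall
  rw [mem_hsClosure]
  intro H h1 h2 h3
  exact h2 v hv fun e he => G.mem_hsClosure.mp (hall e he) H h1 h2 h3

lemma mem_scc {v u : G.V} : u ∈ G.scc v ↔ G.MutReach v u := by
  simp [scc]

lemma self_mem_scc {v : G.V} : v ∈ G.scc v :=
  G.mem_scc.mpr ⟨Relation.ReflTransGen.refl, Relation.ReflTransGen.refl⟩

lemma mem_compUnion {F : Set (Finset G.V)} {v : G.V} :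
    v ∈ G.compUnion F ↔ ∃ C ∈ F, v ∈ C := by
  simp [compUnion]

open Classical in
/-- Number of vertices reachable from `v`. -/
noncomputable def reachCard (v : G.V) : ℕ :=
  (Finset.univ.filter fun u => G.Reaches v u).card

lemma reachCard_lt {v w : G.V} (hstep : G.Step v w) (hnc : ¬ G.OnCycle v) :
    G.reachCard w < G.reachCard v := by
  classical
  unfold reachCard
  apply Finset.card_lt_card
  have hsub : (Finset.univ.filter fun u => G.Reaches w u) ⊆
      (Finset.univ.filter fun u => G.Reaches v u) := by
    intro u hu
    simp only [Finset.mem_filter, Finset.mem_univ, true_and] at hu ⊢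
    exact Relation.ReflTransGen.head hstep hu
  refine (Finset.ssubset_iff_of_subset hsub).mpr ⟨v, ?_, ?_⟩
  · simp only [Finset.mem_filter, Finset.mem_univ, true_and]
    exact Relation.ReflTransGen.refl
  · simp only [Finset.mem_filter, Finset.mem_univ, true_and]
    intro hwv
    exact hnc (Relation.TransGen.head' hstep hwv)

/-- Key lemma: a hereditary set `H` is contained in any hereditary saturated set `H'`
containing the sink and all cycle vertices of `H`. -/
lemma subset_of_hsat {H H' : Finset G.V} {s : G.V} (hG : G.IsSandpile s)
    (hher : G.Hereditary H) (hsat' : G.Saturated H')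
    (hs' : s ∈ H') (hcyc : ∀ v ∈ H, G.OnCycle v → v ∈ H') : H ⊆ H' := by
  classical
  suffices h : ∀ n, ∀ v, G.reachCard v < n → v ∈ H → v ∈ H' by
    intro v hv
    exact h (G.reachCard v + 1) v (Nat.lt_succ_self _) hv
  intro n
  induction n with
  | zero => intro v h; omega
  | succ n ih =>
    intro v hvn hv
    by_cases hc : G.OnCycle v
    · exact hcyc v hv hc
    by_cases hsk : G.IsSink v
    · rw [hG.2.1 v hsk]; exact hs'
    · refine hsat' v hsk fun e he => ?_
      have hw : G.rng e ∈ H := hher e (by rwa [he])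
      have hlt : G.reachCard (G.rng e) < G.reachCard v := G.reachCard_lt ⟨e, he, rfl⟩ hc
      exact ih (G.rng e) (by omega) hw

lemma sink_mem_of_nonempty {H : Finset G.V} {s : G.V} (hG : G.IsSandpile s)
    (hher : G.Hereditary H) (hne : H.Nonempty) : s ∈ H := by
  obtain ⟨v, hv⟩ := hne
  exact G.reach_mem hher (hG.2.2 v) hv

lemma sinkSet_subset {H : Finset G.V} {s : G.V} (hG : G.IsSandpile s)
    (hher : G.Hereditary H) (hsat : G.Saturated H) (hne : H.Nonempty) :
    G.sinkSet ⊆ H := by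
  refine G.subset_of_hsat hG G.sinkSet_hereditary hsat
    (G.sink_mem_of_nonempty hG hher hne) fun v hv hc => ?_
  exact absurd ⟨v, Relation.ReflTransGen.refl, hc⟩ (G.mem_sinkSet.mp hv)

lemma cycle_mem_filter {F : Set (Finset G.V)} (hF : G.IsFilter F) {v : G.V}
    (hv : v ∈ G.hsClosure (G.compUnion F)) (hc : G.OnCycle v) : G.scc v ∈ F := by
  classical
  set K : Finset G.V :=
    Finset.univ.filter fun w => ∀ u, G.Reaches w u → G.OnCycle u → G.scc u ∈ F with hK
  have memK : ∀ w, w ∈ K ↔ ∀ u, G.Reaches w u → G.OnCycle u → G.scc u ∈ F := by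
    intro w; simp [hK]
  have hKher : G.Hereditary K := fun e he => (memK _).mpr fun u hru hcu =>
    (memK _).mp he u (Relation.ReflTransGen.head ⟨e, rfl, rfl⟩ hru) hcu
  have hKsat : G.Saturated K := by
    intro w hw hall
    rw [memK]
    intro u hru hcu
    rcases hru.cases_head with h' | ⟨x, ⟨e, he1, he2⟩, hxu⟩
    · subst h'
      obtain ⟨x, ⟨e, he1, he2⟩, hxw⟩ := G.onCycle_exists hcu
      exact (memK _).mp (hall e he1) w (by rw [he2]; exact hxw) hcu
    · exact (memK _).mp (hall e he1) u (by rw [he2]; exact hxu) hcu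
  have hsub : G.compUnion F ⊆ K := by
    intro w hw
    obtain ⟨C, hCF, hwC⟩ := G.mem_compUnion.mp hw
    rw [memK]
    intro u hru hcu
    exact hF.2 C hCF (G.scc u) ⟨u, hcu, rfl⟩ ⟨w, hwC, u, G.self_mem_scc, hru⟩
  have hvK := G.mem_hsClosure.mp hv K hKher hKsat hsub
  exact (memK _).mp hvK v Relation.ReflTransGen.refl hc

end DGraph
/-- The map `φ_E : 𝓕_E → 𝓗_E` sending `∅` to `S_E` and a nonempty
filter `F` to the hereditary saturated closure of `⋃_{C ∈ F} C⁰` is an order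
isomorphism of lattices. -/
theorem filters_hereditary_orderIso (G : DGraph) (s : G.V) (hG : G.IsSandpile s) :
    ∃ φ : {F : Set (Finset G.V) // G.IsFilter F} →
          {H : Finset G.V // H.Nonempty ∧ G.Hereditary H ∧ G.Saturated H},
      Function.Bijective φ ∧
      (∀ F F', F.1 ⊆ F'.1 ↔ (φ F).1 ⊆ (φ F').1) ∧
      (∀ F, F.1 = ∅ → (φ F).1 = G.sinkSet) ∧
      (∀ F, F.1 ≠ ∅ → (φ F).1 = G.hsClosure (G.compUnion F.1)) := by
  classical
  have hSne : G.sinkSet.Nonempty := ⟨s, G.sink_mem_sinkSet hG.1⟩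
  -- nonempty union of components of a nonempty filter
  have cuNe : ∀ F : Set (Finset G.V), G.IsFilter F → F ≠ ∅ → (G.compUnion F).Nonempty := by
    intro F hF hFne
    obtain ⟨C, hC⟩ := Set.nonempty_iff_ne_empty.mpr hFne
    obtain ⟨v, _, rfl⟩ := hF.1 hC
    exact ⟨v, G.mem_compUnion.mpr ⟨_, hC, G.self_mem_scc⟩⟩
  have clNe : ∀ F : {F : Set (Finset G.V) // G.IsFilter F}, F.1 ≠ ∅ →
      (G.hsClosure (G.compUnion F.1)).Nonempty := by
    intro F h
    obtain ⟨v, hv⟩ := cuNe F.1 F.2 h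
    exact ⟨v, G.subset_hsClosure hv⟩
  let φ : {F : Set (Finset G.V) // G.IsFilter F} →
      {H : Finset G.V // H.Nonempty ∧ G.Hereditary H ∧ G.Saturated H} :=
    fun F => if h : F.1 = ∅ then
        ⟨G.sinkSet, hSne, G.sinkSet_hereditary, G.sinkSet_saturated⟩
      else
        ⟨G.hsClosure (G.compUnion F.1), clNe F h, G.hsClosure_hereditary _,
          G.hsClosure_saturated⟩
  have hpos : ∀ F, F.1 = ∅ → (φ F).1 = G.sinkSet := by
    intro F h; simp only [φ, dif_pos h]
  have hneg : ∀ F, F.1 ≠ ∅ → (φ F).1 = G.hsClosure (G.compUnion F.1) := by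
    intro F h; simp only [φ, dif_neg h]
  -- monotonicity, both directions
  have hmono : ∀ F F', F.1 ⊆ F'.1 ↔ (φ F).1 ⊆ (φ F').1 := by
    intro F F'
    constructor
    · intro hFF'
      by_cases hF : F.1 = ∅
      · rw [hpos F hF]
        exact G.sinkSet_subset hG (φ F').2.2.1 (φ F').2.2.2 (φ F').2.1
      · have hF' : F'.1 ≠ ∅ := by
          obtain ⟨C, hC⟩ := Set.nonempty_iff_ne_empty.mpr hF
          exact Set.nonempty_iff_ne_empty.mp ⟨C, hFF' hC⟩
        rw [hneg F hF, hneg F' hF']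
        refine G.hsClosure_min (G.hsClosure_hereditary _) G.hsClosure_saturated ?_
        intro v hv
        obtain ⟨C, hC, hvC⟩ := G.mem_compUnion.mp hv
        exact G.subset_hsClosure (G.mem_compUnion.mpr ⟨C, hFF' hC, hvC⟩)
    · intro hsub C hC
      have hF : F.1 ≠ ∅ := Set.nonempty_iff_ne_empty.mp ⟨C, hC⟩
      obtain ⟨v, hvc, rfl⟩ := F.2.1 hC
      have hv1 : v ∈ (φ F).1 := by
        rw [hneg F hF]
        exact G.subset_hsClosure (G.mem_compUnion.mpr ⟨_, hC, G.self_mem_scc⟩)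
      have hv2 := hsub hv1
      by_cases hF' : F'.1 = ∅
      · rw [hpos F' hF'] at hv2
        exact absurd ⟨v, Relation.ReflTransGen.refl, hvc⟩ (G.mem_sinkSet.mp hv2)
      · rw [hneg F' hF'] at hv2
        exact G.cycle_mem_filter F'.2 hv2 hvc
  refine ⟨φ, ⟨?_, ?_⟩, hmono, hpos, hneg⟩
  · -- injective
    intro F F' h
    apply Subtype.ext
    apply Set.Subset.antisymm
    · exact (hmono F F').mpr (by rw [h])
    · exact (hmono F' F).mpr (by rw [h])
  · -- surjective
    rintro ⟨H, hHne, hHher, hHsat⟩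
    set F : Set (Finset G.V) := {C | C ∈ G.cyclicComps ∧ ∀ v ∈ C, v ∈ H} with hFdef
    have hFfil : G.IsFilter F := by
      constructor
      · intro C hC; exact hC.1
      · rintro C hC C' hC' ⟨u, huC, w, hwC', hr⟩
        refine ⟨hC', ?_⟩
        obtain ⟨v', _, rfl⟩ := hC'
        have hwH : w ∈ H := G.reach_mem hHher hr (hC.2 u huC)
        intro x hx
        have hw' := G.mem_scc.mp hwC'
        have hx' := G.mem_scc.mp hx
        exact G.reach_mem hHher (hw'.2.trans hx'.1) hwH
    refine ⟨⟨F, hFfil⟩, Subtype.ext ?_⟩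
    by_cases hF : F = ∅
    · rw [hpos ⟨F, hFfil⟩ hF]
      apply Finset.Subset.antisymm
      · exact G.sinkSet_subset hG hHher hHsat hHne
      · intro v hv
        rw [G.mem_sinkSet]
        rintro ⟨u, hru, hcu⟩
        have huH : u ∈ H := G.reach_mem hHher hru hv
        have : G.scc u ∈ F := by
          refine ⟨⟨u, hcu, rfl⟩, fun x hx => ?_⟩
          exact G.reach_mem hHher (G.mem_scc.mp hx).1 huH
        rw [hF] at this
        exact this
    · rw [hneg ⟨F, hFfil⟩ hF]
      apply Finset.Subset.antisymm
      · refine G.hsClosure_min hHher hHsat ?_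
        intro v hv
        obtain ⟨C, hC, hvC⟩ := G.mem_compUnion.mp hv
        exact hC.2 v hvC
      · intro v hv
        rw [G.mem_hsClosure]
        intro H'' h1 h2 h3
        have hH''ne : H''.Nonempty := by
          obtain ⟨w, hw⟩ := cuNe F hFfil hF
          exact ⟨w, h3 hw⟩
        refine G.subset_of_hsat hG hHher h2
          (G.sink_mem_of_nonempty hG h1 hH''ne) (fun w hwH hwc => ?_) hv
        have hsccF : G.scc w ∈ F := by
          refine ⟨⟨w, hwc, rfl⟩, fun x hx => ?_⟩
          exact G.reach_mem hHher (G.mem_scc.mp hx).1 hwH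
        exact h3 (G.mem_compUnion.mpr ⟨_, hsccF, G.self_mem_scc⟩)
end

section
/- Let E be a sandpile graph. The map ψ_E : 𝓕_E → Ideal(𝓗^s_E) defined by ψ_E(∅) = {S_E} and, for a nonempty filter F, ψ_E(F) = {S_E} ∪ {H_C : C ∈ F}, is an order isomorphism between the lattice of filters of 𝓒_E and the lattice of ideals of the poset 𝓗^s_E, both ordered by inclusion. -/
/-! ### Auxiliary lemmas for Statement 13 -/

namespace SandAux

open DGraph Relation Finset

variable (G : DGraph)

lemma mem_sinkSet {v : G.V} :
    v ∈ G.sinkSet ↔ ¬ ∃ u, G.Reaches v u ∧ G.OnCycle u := by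
  classical
  simp [DGraph.sinkSet]

lemma mem_scc {v u : G.V} : u ∈ G.scc v ↔ G.MutReach v u := by
  classical
  simp [DGraph.scc]

lemma mem_hsClosure {v : G.V} {X : Finset G.V} :
    v ∈ G.hsClosure X ↔
      ∀ H : Finset G.V, G.Hereditary H → G.Saturated H → X ⊆ H → v ∈ H := by
  classical
  simp [DGraph.hsClosure]

lemma subset_hsClosure (X : Finset G.V) : X ⊆ G.hsClosure X := by
  intro v hv
  exact (mem_hsClosure G).2 fun H _ _ hX => hX hv

lemma hereditary_reach {H : Finset G.V} (hher : G.Hereditary H) {u w : G.V}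
    (hu : u ∈ H) (h : G.Reaches u w) : w ∈ H := by
  induction h with
  | refl => exact hu
  | tail _ hstep ih =>
      obtain ⟨e, he1, he2⟩ := hstep
      exact he2 ▸ hher e (he1 ▸ ih)

lemma onCycle_not_sinkSet {v : G.V} (h : G.OnCycle v) : v ∉ G.sinkSet := by
  rw [mem_sinkSet]
  exact fun hn => hn ⟨v, Relation.ReflTransGen.refl, h⟩

lemma mutReach_refl (v : G.V) : G.MutReach v v :=
  ⟨Relation.ReflTransGen.refl, Relation.ReflTransGen.refl⟩

lemma mutReach_symm {a b : G.V} (h : G.MutReach a b) : G.MutReach b a := ⟨h.2, h.1⟩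

lemma mutReach_trans {a b c : G.V} (h : G.MutReach a b) (h' : G.MutReach b c) :
    G.MutReach a c := ⟨h.1.trans h'.1, h'.2.trans h.2⟩

lemma scc_eq {a b : G.V} (h : G.MutReach a b) : G.scc a = G.scc b := by
  ext u
  rw [mem_scc, mem_scc]
  exact ⟨fun hu => mutReach_trans G (mutReach_symm G h) hu,
    fun hu => mutReach_trans G h hu⟩

open Classical in
/-- The set of vertices all of whose reachable cycle vertices are reachable from `C`. -/
noncomputable def wSet (C : Finset G.V) : Finset G.V :=
  Finset.univ.filter fun v => ∀ u, G.Reaches v u → G.OnCycle u → ∃ w ∈ C, G.Reaches w u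

lemma mem_wSet {C : Finset G.V} {v : G.V} :
    v ∈ wSet G C ↔ ∀ u, G.Reaches v u → G.OnCycle u → ∃ w ∈ C, G.Reaches w u := by
  classical
  simp [wSet]

lemma subset_wSet (C : Finset G.V) : C ⊆ wSet G C := by
  intro v hv
  exact (mem_wSet G).2 fun u hr _ => ⟨v, hv, hr⟩

lemma wSet_hereditary (C : Finset G.V) : G.Hereditary (wSet G C) := by
  intro e he
  rw [mem_wSet] at he ⊢
  intro u hr hc
  exact he u (Relation.ReflTransGen.head ⟨e, rfl, rfl⟩ hr) hc

lemma wSet_saturated (C : Finset G.V) : G.Saturated (wSet G C) := by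
  intro v hns hall
  rw [mem_wSet]
  intro u hr hc
  rcases hr.cases_head with h | ⟨w, hvw, hwu⟩
  · -- u = v, so v is on a cycle; step into the cycle
    subst h
    obtain ⟨w, hvw, hwv⟩ := (Relation.TransGen.head'_iff).1 hc
    obtain ⟨e, he1, he2⟩ := hvw
    have hw : G.rng e ∈ wSet G C := hall e he1
    rw [mem_wSet] at hw
    exact hw v (he2 ▸ hwv) hc
  · obtain ⟨e, he1, he2⟩ := hvw
    have hw : G.rng e ∈ wSet G C := hall e he1
    rw [mem_wSet] at hw
    exact hw u (he2 ▸ hwu) hc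

lemma hsClosure_subset {X H : Finset G.V} (hher : G.Hereditary H)
    (hsat : G.Saturated H) (hX : X ⊆ H) : G.hsClosure X ⊆ H := by
  intro v hv
  exact (mem_hsClosure G).1 hv H hher hsat hX

/-- Key converse direction: if `hsClosure C ⊆ hsClosure C'` and `C` is a cyclic
component, then there is a path from `C'` to `C`. -/
lemma compLe_of_hsClosure_subset {C C' : Finset G.V} (hC : C ∈ G.cyclicComps)
    (hsub : G.hsClosure C ⊆ G.hsClosure C') : G.compLe C' C := by
  obtain ⟨a, ha, rfl⟩ := hC
  have haC : a ∈ G.scc a := (mem_scc G).2 (mutReach_refl G a)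
  have h1 : a ∈ G.hsClosure C' := hsub (subset_hsClosure G _ haC)
  have h2 : a ∈ wSet G C' :=
    hsClosure_subset G (wSet_hereditary G C') (wSet_saturated G C') (subset_wSet G C') h1
  obtain ⟨w, hwC', hwa⟩ := (mem_wSet G).1 h2 a Relation.ReflTransGen.refl ha
  exact ⟨w, hwC', a, haC, hwa⟩

/-- Forward direction: a path from `C` to a cyclic component `C'` gives
`hsClosure C' ⊆ hsClosure C`. -/
lemma hsClosure_subset_of_compLe {C C' : Finset G.V} (hC' : C' ∈ G.cyclicComps)
    (h : G.compLe C C') : G.hsClosure C' ⊆ G.hsClosure C := by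
  obtain ⟨u, huC, w, hwC', huw⟩ := h
  obtain ⟨b, _, rfl⟩ := hC'
  intro v hv
  rw [mem_hsClosure] at hv ⊢
  intro H hher hsat hCH
  refine hv H hher hsat ?_
  intro x hx
  have hbw : G.MutReach b w := (mem_scc G).1 hwC'
  have hbx : G.MutReach b x := (mem_scc G).1 hx
  have : G.Reaches u x := huw.trans (hbw.2.trans hbx.1)
  exact hereditary_reach G hher (hCH huC) this

lemma cyclicComp_inj {C C' : Finset G.V} (hC : C ∈ G.cyclicComps)
    (hC' : C' ∈ G.cyclicComps) (h : G.hsClosure C = G.hsClosure C') : C = C' := by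
  have h1 : G.compLe C' C := compLe_of_hsClosure_subset G hC (le_of_eq h)
  have h2 : G.compLe C C' := compLe_of_hsClosure_subset G hC' (le_of_eq h.symm)
  obtain ⟨a, ha, rfl⟩ := hC
  obtain ⟨b, hb, rfl⟩ := hC'
  obtain ⟨u, huC, x, hxC', hux⟩ := h2
  obtain ⟨w, hwC', y, hyC, hwy⟩ := h1
  have hau : G.MutReach a u := (mem_scc G).1 huC
  have hay : G.MutReach a y := (mem_scc G).1 hyC
  have hbx : G.MutReach b x := (mem_scc G).1 hxC'
  have hbw : G.MutReach b w := (mem_scc G).1 hwC'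
  have hab : G.Reaches a b := hau.1.trans (hux.trans hbx.2)
  have hba : G.Reaches b a := hbw.1.trans (hwy.trans hay.2)
  exact scc_eq G ⟨hab, hba⟩

lemma cyclicComps_nonempty_oncycle {C : Finset G.V} (hC : C ∈ G.cyclicComps) :
    ∃ v ∈ C, G.OnCycle v := by
  obtain ⟨a, ha, rfl⟩ := hC
  exact ⟨a, (mem_scc G).2 (mutReach_refl G a), ha⟩

lemma hsClosure_not_subset_sinkSet {C : Finset G.V} (hC : C ∈ G.cyclicComps) :
    ¬ G.hsClosure C ⊆ G.sinkSet := by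
  obtain ⟨v, hvC, hv⟩ := cyclicComps_nonempty_oncycle G hC
  intro hsub
  exact onCycle_not_sinkSet G hv (hsub (subset_hsClosure G _ hvC))

/-- In a sandpile graph, `S_E` is contained in every hereditary saturated set
containing the (unique) sink. -/
lemma sinkSet_subset_of_sink_mem {s : G.V} (hG : G.IsSandpile s) {H : Finset G.V}
    (hher : G.Hereditary H) (hsat : G.Saturated H) (hs : s ∈ H) :
    G.sinkSet ⊆ H := by
  classical
  have key : ∀ n : ℕ, ∀ v : G.V,
      (Finset.univ.filter fun u => G.Reaches v u).card = n → v ∈ G.sinkSet → v ∈ H := by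
    intro n
    induction n using Nat.strong_induction_on with
    | _ n ih =>
      intro v hcard hv
      by_cases hsink : G.IsSink v
      · exact (hG.2.1 v hsink) ▸ hs
      · refine hsat v hsink ?_
        intro e he
        set w := G.rng e with hw
        have hstep : G.Step v w := ⟨e, he, rfl⟩
        have hwS : w ∈ G.sinkSet := by
          rw [mem_sinkSet] at hv ⊢
          intro ⟨u, hru, hcu⟩
          exact hv ⟨u, Relation.ReflTransGen.head hstep hru, hcu⟩
        have hvnotw : ¬ G.Reaches w v := by
          intro hwv
          have : G.OnCycle v := Relation.TransGen.head' hstep hwv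
          exact onCycle_not_sinkSet G this hv
        have hsubset : (Finset.univ.filter fun u => G.Reaches w u) ⊂
            (Finset.univ.filter fun u => G.Reaches v u) := by
          refine Finset.ssubset_iff_of_subset ?_ |>.2 ?_
          · intro u hu
            simp only [Finset.mem_filter, Finset.mem_univ, true_and] at hu ⊢
            exact Relation.ReflTransGen.head hstep hu
          · refine ⟨v, ?_, ?_⟩ <;>
              simp only [Finset.mem_filter, Finset.mem_univ, true_and]
            · exact Relation.ReflTransGen.refl
            · exact hvnotw
        have hlt : (Finset.univ.filter fun u => G.Reaches w u).card < n :=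
          hcard ▸ Finset.card_lt_card hsubset
        exact ih _ hlt w rfl hwS
  exact fun v hv => key _ v rfl hv

lemma sink_mem_hsClosure {s : G.V} (hG : G.IsSandpile s) {C : Finset G.V}
    (hC : C.Nonempty) : s ∈ G.hsClosure C := by
  obtain ⟨c, hc⟩ := hC
  rw [mem_hsClosure]
  intro H hher hsat hCH
  exact hereditary_reach G hher (hCH hc) (hG.2.2 c)

lemma sinkSet_subset_hsClosure {s : G.V} (hG : G.IsSandpile s) {C : Finset G.V}
    (hC : C ∈ G.cyclicComps) : G.sinkSet ⊆ G.hsClosure C := by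
  obtain ⟨v, hvC, _⟩ := cyclicComps_nonempty_oncycle G hC
  exact sinkSet_subset_of_sink_mem G hG (G.hsClosure_hereditary C)
    (by
      intro u hns hall
      rw [mem_hsClosure]
      intro H hher hsat hCH
      refine hsat u hns ?_
      intro e he
      exact (mem_hsClosure G).1 (hall e he) H hher hsat hCH)
    (sink_mem_hsClosure G hG ⟨v, hvC⟩)

end SandAux
/-- The map `ψ_E : 𝓕_E → Ideal(𝓗^s_E)`, `F ↦ {S_E} ∪ {H_C : C ∈ F}`,
is an order isomorphism between the lattice of filters of `𝓒_E` and the lattice of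
ideals of the poset `𝓗^s_E`. -/
theorem filters_hsIdeals_orderIso (G : DGraph) (s : G.V) (hG : G.IsSandpile s) :
    ∃ ψ : {F : Set (Finset G.V) // G.IsFilter F} → {I : Set (Finset G.V) // G.IsHsIdeal I},
      Function.Bijective ψ ∧
      (∀ F F', F.1 ⊆ F'.1 ↔ (ψ F).1 ⊆ (ψ F').1) ∧
      (∀ F, (ψ F).1 = insert G.sinkSet {H | ∃ C ∈ F.1, H = G.hsClosure C}) := by
  classical
  open SandAux in
  -- the underlying map on sets
  set φ : Set (Finset G.V) → Set (Finset G.V) :=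
    fun F => insert G.sinkSet {H | ∃ C ∈ F, H = G.hsClosure C} with hφ
  -- ψ F is an ideal
  have hIdeal : ∀ F : Set (Finset G.V), G.IsFilter F → G.IsHsIdeal (φ F) := by
    intro F hF
    refine ⟨⟨G.sinkSet, Set.mem_insert _ _⟩, ?_, ?_⟩
    · intro x hx
      rcases hx with hx | ⟨C, hCF, rfl⟩
      · exact hx ▸ Set.mem_insert _ _
      · exact Set.mem_insert_of_mem _ ⟨C, hF.1 hCF, rfl⟩
    · intro x hx y hy hyx
      rcases hy with hy | ⟨C, hC, rfl⟩
      · exact hy ▸ Set.mem_insert _ _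
      · rcases hx with hx | ⟨C', hC'F, rfl⟩
        · exact absurd (hx ▸ hyx) (hsClosure_not_subset_sinkSet G hC)
        · have hle : G.compLe C' C := compLe_of_hsClosure_subset G hC hyx
          exact Set.mem_insert_of_mem _ ⟨C, hF.2 C' hC'F C hC hle, rfl⟩
  set ψ : {F : Set (Finset G.V) // G.IsFilter F} → {I : Set (Finset G.V) // G.IsHsIdeal I} :=
    fun F => ⟨φ F.1, hIdeal F.1 F.2⟩ with hψ
  -- order characterization
  have horder : ∀ F F' : {F : Set (Finset G.V) // G.IsFilter F},
      F.1 ⊆ F'.1 ↔ (ψ F).1 ⊆ (ψ F').1 := by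
    intro F F'
    constructor
    · intro h x hx
      rcases hx with hx | ⟨C, hC, rfl⟩
      · exact hx ▸ Set.mem_insert _ _
      · exact Set.mem_insert_of_mem _ ⟨C, h hC, rfl⟩
    · intro h C hC
      have hmem : G.hsClosure C ∈ (ψ F').1 :=
        h (Set.mem_insert_of_mem _ ⟨C, hC, rfl⟩)
      have hCcyc : C ∈ G.cyclicComps := F.2.1 hC
      rcases hmem with hmem | ⟨C'', hC'', heq⟩
      · exact absurd (hmem ▸ Set.Subset.refl _) (hsClosure_not_subset_sinkSet G hCcyc)
      · have : C = C'' := cyclicComp_inj G hCcyc (F'.2.1 hC'') heq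
        exact this ▸ hC''
  refine ⟨ψ, ⟨?_, ?_⟩, horder, fun F => rfl⟩
  · -- injective
    intro F F' h
    have h1 : (ψ F).1 = (ψ F').1 := congrArg Subtype.val h
    exact Subtype.ext (Set.Subset.antisymm
      ((horder F F').2 (h1 ▸ Set.Subset.refl _))
      ((horder F' F).2 (h1 ▸ Set.Subset.refl _)))
  · -- surjective
    intro ⟨I, hI⟩
    set F : Set (Finset G.V) := {C ∈ G.cyclicComps | G.hsClosure C ∈ I} with hFdef
    have hFfil : G.IsFilter F := by
      refine ⟨fun C hC => hC.1, ?_⟩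
      intro C hC C' hC' hle
      refine ⟨hC', ?_⟩
      exact hI.2.2 _ hC.2 _ (Set.mem_insert_of_mem _ ⟨C', hC', rfl⟩)
        (hsClosure_subset_of_compLe G hC' hle)
    refine ⟨⟨F, hFfil⟩, Subtype.ext ?_⟩
    have hsinkI : G.sinkSet ∈ I := by
      obtain ⟨x, hx⟩ := hI.1
      rcases hI.2.1 hx with hxs | ⟨C, hC, rfl⟩
      · exact hxs ▸ hx
      · exact hI.2.2 _ hx _ (Set.mem_insert _ _) (sinkSet_subset_hsClosure G hG hC)
    apply Set.Subset.antisymm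
    · intro x hx
      rcases hx with hx | ⟨C, hC, rfl⟩
      · exact hx ▸ hsinkI
      · exact hC.2
    · intro x hx
      rcases hI.2.1 hx with hxs | ⟨C, hC, rfl⟩
      · exact hxs ▸ Set.mem_insert _ _
      · exact Set.mem_insert_of_mem _ ⟨C, ⟨hC, hx⟩, rfl⟩
end
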